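/- arXiv:2306.01412 — 7 statements merged into one kernel-verified Lean document; each statement's English description precedes it below -/
import Mathlib

section
/- Let f : ℝ → ℝ be a smooth (infinitely differentiable), compactly supported function such that for every x ∈ ℝ the principal-value limit defining the Hilbert transform H[f](x) exists. Then ∫_ℝ H[f](x) · x · f(x) dx = (1/(2π)) (∫_ℝ f(x) dx)². -/
open MeasureTheory Filter Set intervalIntegral

lemma set_eq (x ε R : ℝ) (hε : 0 < ε) :
    {y : ℝ | ε < |x - y| ∧ |x - y| < R}
      = Ioo (x - R) (x - ε) ∪ Ioo (x + ε) (x + R) := by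
  ext y
  simp only [mem_setOf_eq, mem_union, mem_Ioo]
  constructor
  · rintro ⟨h1, h2⟩
    rcases abs_cases (x - y) with ⟨e, _⟩ | ⟨e, _⟩
    · left; constructor <;> linarith
    · right; constructor <;> linarith
  · rintro (⟨h3, h4⟩ | ⟨h3, h4⟩)
    · have : |x - y| = x - y := abs_of_pos (by linarith)
      constructor <;> linarith
    · have : |x - y| = -(x - y) := abs_of_neg (by linarith)
      constructor <;> linarith

lemma int_on (x a b : ℝ) (hx : x ∉ Icc a b) :
    IntegrableOn (fun y => 1 / (x - y)) (Ioo a b) volume := by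
  apply IntegrableOn.mono_set (t := Icc a b) _ Ioo_subset_Icc_self
  apply ContinuousOn.integrableOn_Icc
  apply ContinuousOn.div continuousOn_const (by fun_prop)
  intro y hy hxy
  have hxy' : x = y := by linarith [sub_eq_zero.1 hxy]
  exact hx (hxy' ▸ hy)

lemma odd_zero (x ε R : ℝ) (hε : 0 < ε) (hR : ε < R) :
    ∫ y in {y : ℝ | ε < |x - y| ∧ |x - y| < R}, 1 / (x - y) = 0 := by
  rw [set_eq x ε R hε]
  have hdisj : Disjoint (Ioo (x - R) (x - ε)) (Ioo (x + ε) (x + R)) := by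
    apply Set.disjoint_left.2
    rintro y ⟨_, h2⟩ ⟨h3, _⟩; linarith
  rw [setIntegral_union hdisj measurableSet_Ioo
    (int_on x _ _ (by simp only [mem_Icc]; rintro ⟨_, h⟩; linarith))
    (int_on x _ _ (by simp only [mem_Icc]; rintro ⟨h, _⟩; linarith))]
  have e1 : ∀ a b : ℝ, a ≤ b → (∫ y in Ioo a b, 1 / (x - y))
      = ∫ y in a..b, 1 / (x - y) := by
    intro a b hab
    rw [intervalIntegral.integral_of_le hab, integral_Ioc_eq_integral_Ioo]
  rw [e1 _ _ (by linarith), e1 _ _ (by linarith)]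
  have c1 : (∫ y in (x - R)..(x - ε), 1 / (x - y)) = ∫ t in ε..R, 1 / t := by
    have := intervalIntegral.integral_comp_sub_left (a := x - R) (b := x - ε)
      (fun t => 1 / t) x
    simpa using this
  have c2 : (∫ y in (x + ε)..(x + R), 1 / (x - y)) = ∫ t in (-R)..(-ε), 1 / t := by
    have := intervalIntegral.integral_comp_sub_left (a := x + ε) (b := x + R)
      (fun t => 1 / t) x
    simpa [sub_add_eq_sub_sub, neg_sub] using this
  rw [c1, c2, integral_one_div (by
      intro h; rcases (Set.mem_uIcc.1 h) with ⟨h1,_⟩|⟨_,h2⟩ <;> linarith),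
    integral_one_div (by
      intro h; rcases (Set.mem_uIcc.1 h) with ⟨h1,_⟩|⟨_,h2⟩ <;> linarith)]
  have hR0 : (0:ℝ) < R := lt_trans hε hR
  rw [neg_div_neg_eq, ← Real.log_mul (by positivity) (by positivity),
    div_mul_div_comm, show R * ε / (ε * R) = 1 by field_simp, Real.log_one]


lemma meas_S (x ε : ℝ) : MeasurableSet {y : ℝ | ε < |x - y|} := by
  apply measurableSet_lt measurable_const
  exact (measurable_const.sub measurable_id).abs

lemma meas_S' (x ε R : ℝ) : MeasurableSet {y : ℝ | ε < |x - y| ∧ |x - y| < R} := by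
  apply MeasurableSet.inter (meas_S x ε)
  exact measurableSet_lt (measurable_const.sub measurable_id).abs measurable_const

lemma uniform_bound (f : ℝ → ℝ) (hc : Continuous f) (L M : ℝ)
    (hL : ∀ a b : ℝ, |f a - f b| ≤ L * |a - b|)
    (hM : ∀ y : ℝ, M < |y| → f y = 0) (hM0 : 0 < M)
    (ε : ℝ) (hε : 0 < ε) (x : ℝ) (hx : |x| ≤ M) :
    |∫ y in {y : ℝ | ε < |x - y|}, f y / (x - y)| ≤ L * (2 * (2 * M + 1)) := by
  set R : ℝ := 2 * M + 1 with hRdef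
  have hLnn : 0 ≤ L := by
    have h1 : f (M+1) = 0 := hM _ (by rw [abs_of_pos (by linarith)]; linarith)
    have h2 : f (M+2) = 0 := hM _ (by rw [abs_of_pos (by linarith)]; linarith)
    have := hL (M+1) (M+2)
    rw [h1, h2, sub_zero, abs_zero, show (M+1:ℝ) - (M+2) = -1 by ring] at this
    simpa using this
  -- restrict to S'
  have hrestrict : (∫ y in {y : ℝ | ε < |x - y|}, f y / (x - y))
      = ∫ y in {y : ℝ | ε < |x - y| ∧ |x - y| < R}, f y / (x - y) := by
    rw [← MeasureTheory.integral_indicator (meas_S x ε), ← MeasureTheory.integral_indicator (meas_S' x ε R)]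
    congr 1
    ext y
    simp only [Set.indicator_apply, mem_setOf_eq]
    split_ifs with h1 h2 h3
    · rfl
    · have hfy : f y = 0 := by
        apply hM
        have hy : |y| ≥ |x - y| - |x| := by
          have := abs_sub_abs_le_abs_sub (x - y) x
          simp only [sub_sub_cancel_left, abs_neg] at this
          linarith
        have h2' : ¬ |x - y| < R := fun hh => h2 ⟨h1, hh⟩
        push_neg at h2'
        linarith
      rw [hfy, zero_div]
    · exact absurd h3.1 h1
    · rfl
  rw [hrestrict]
  by_cases hεR : R ≤ ε
  · have : {y : ℝ | ε < |x - y| ∧ |x - y| < R} = ∅ := by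
      ext y; simp only [mem_setOf_eq, mem_empty_iff_false, iff_false, not_and]
      intro h; linarith
    rw [this]
    simp; exact mul_nonneg hLnn (by linarith)
  push_neg at hεR
  -- decompose
  set S' := {y : ℝ | ε < |x - y| ∧ |x - y| < R} with hS'
  have hmeas := meas_S' x ε R
  have hvol : volume S' ≤ ENNReal.ofReal (2 * R) := by
    have hsub : S' ⊆ Ioo (x - R) (x + R) := by
      rw [hS', set_eq x ε R hε]
      rintro y (⟨h1, h2⟩ | ⟨h1, h2⟩) <;> exact ⟨by linarith, by linarith⟩
    calc volume S' ≤ volume (Ioo (x - R) (x + R)) := measure_mono hsub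
      _ = ENNReal.ofReal (2 * R) := by rw [Real.volume_Ioo]; congr 1; ring
  have hvolfin : volume S' < ⊤ := lt_of_le_of_lt hvol ENNReal.ofReal_lt_top
  have hasm : AEStronglyMeasurable (fun y => (f y - f x) / (x - y)) volume :=
    (((hc.measurable.sub measurable_const).div
        (measurable_const.sub measurable_id))).aestronglyMeasurable
  have hi1 : IntegrableOn (fun y => (f y - f x) / (x - y)) S' volume := by
    apply Measure.integrableOn_of_bounded hvolfin.ne hasm
    · apply (ae_restrict_iff' hmeas).2
      apply Filter.Eventually.of_forall
      intro y hy
      rw [Real.norm_eq_abs, abs_div]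
      rw [div_le_iff₀ (lt_trans hε hy.1)]
      calc |f y - f x| ≤ L * |y - x| := hL y x
        _ = L * |x - y| := by rw [abs_sub_comm]
  have hi2 : IntegrableOn (fun y => 1 / (x - y)) S' volume := by
    rw [hS', set_eq x ε R hε]
    apply IntegrableOn.union
    · exact int_on x _ _ (by simp only [mem_Icc]; rintro ⟨_, h⟩; linarith)
    · exact int_on x _ _ (by simp only [mem_Icc]; rintro ⟨h, _⟩; linarith)
  have hsplit : (∫ y in S', f y / (x - y))
      = (∫ y in S', (f y - f x) / (x - y)) + f x * ∫ y in S', 1 / (x - y) := by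
    rw [← MeasureTheory.integral_const_mul, ← integral_add hi1 (hi2.const_mul (f x))]
    apply setIntegral_congr_fun hmeas
    intro y hy
    have : x - y ≠ 0 := by
      intro h; simp only [hS', mem_setOf_eq] at hy
      rw [h, abs_zero] at hy; linarith [hy.1]
    field_simp
    ring
  rw [hsplit, odd_zero x ε R hε hεR, mul_zero, add_zero]
  calc |∫ y in S', (f y - f x) / (x - y)|
      ≤ L * (volume S').toReal := by
        rw [← Real.norm_eq_abs]
        apply norm_setIntegral_le_of_norm_le_const_ae' hvolfin
        apply Filter.Eventually.of_forall
        intro y hy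
        rw [Real.norm_eq_abs, abs_div, div_le_iff₀ (lt_trans hε hy.1)]
        calc |f y - f x| ≤ L * |y - x| := hL y x
          _ = L * |x - y| := by rw [abs_sub_comm]
    _ ≤ L * (2 * R) := by
        apply mul_le_mul_of_nonneg_left _ hLnn
        rw [← ENNReal.ofReal_le_ofReal_iff (by linarith)] at *
        calc ENNReal.ofReal (volume S').toReal = volume S' := ENNReal.ofReal_toReal hvolfin.ne
          _ ≤ _ := hvol

lemma lip_of (f : ℝ → ℝ) (hf : ContDiff ℝ (⊤ : ℕ∞) f) (hsupp : HasCompactSupport f) :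
    ∃ L : ℝ, ∀ a b : ℝ, |f a - f b| ≤ L * |a - b| := by
  have hd : Differentiable ℝ f := hf.differentiable (by simp)
  have hdc : Continuous (deriv f) := hf.continuous_deriv (by simp)
  obtain ⟨C, hC⟩ := (hsupp.deriv).exists_bound_of_continuous hdc
  refine ⟨(Real.toNNReal C : ℝ), fun a b => ?_⟩
  have hlip : LipschitzWith (Real.toNNReal C) f := by
    apply lipschitzWith_of_nnnorm_deriv_le hd
    intro x
    have := hC x
    simp only [Real.norm_eq_abs] at this
    rw [← NNReal.coe_le_coe]
    simp only [coe_nnnorm, Real.norm_eq_abs, Real.coe_toNNReal', le_max_iff]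
    exact Or.inl this
  have := hlip.dist_le_mul a b
  rwa [Real.dist_eq, Real.dist_eq] at this

variable (f : ℝ → ℝ)

-- symmetrization at fixed ε
lemma sym_step (hc : Continuous f) (hsupp : HasCompactSupport f) (ε : ℝ) (hε : 0 < ε) :
    2 * ∫ x : ℝ, x * f x * (∫ y in {y : ℝ | ε < |x - y|}, f y / (x - y))
      = ∫ p : ℝ × ℝ, (if ε < |p.1 - p.2| then f p.1 * f p.2 else 0) := by
  classical
  set G : ℝ × ℝ → ℝ := fun p => if ε < |p.1 - p.2| then p.1 * f p.1 * (f p.2 / (p.1 - p.2)) else 0 with hG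
  have hmeasset : MeasurableSet {p : ℝ × ℝ | ε < |p.1 - p.2|} :=
    measurableSet_lt measurable_const ((measurable_fst.sub measurable_snd).abs)
  have hGmeas : Measurable G := by
    apply Measurable.ite hmeasset
    · exact ((measurable_fst.mul (hc.measurable.comp measurable_fst)).mul
        ((hc.measurable.comp measurable_snd).div (measurable_fst.sub measurable_snd)))
    · exact measurable_const
  have hxf : Continuous (fun x : ℝ => x * f x) := continuous_id.mul hc
  have hxfsupp : HasCompactSupport (fun x : ℝ => x * f x) := by
    apply hsupp.mul_left
  have hxfint : Integrable (fun x : ℝ => x * f x) := hxf.integrable_of_hasCompactSupport hxfsupp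
  have hfint : Integrable f := hc.integrable_of_hasCompactSupport hsupp
  have hBint : Integrable (fun p : ℝ × ℝ => (|p.1 * f p.1| / ε) * |f p.2|) (volume.prod volume) :=
    Integrable.mul_prod (hxfint.abs.div_const ε) hfint.abs
  have hGbound : ∀ p : ℝ × ℝ, ‖G p‖ ≤ (|p.1 * f p.1| / ε) * |f p.2| := by
    intro p
    rw [hG]
    simp only [Real.norm_eq_abs]
    split_ifs with h
    · rw [abs_mul, abs_div, div_mul_eq_mul_div, mul_div_assoc]
      apply mul_le_mul_of_nonneg_left _ (abs_nonneg _)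
      exact div_le_div_of_nonneg_left (abs_nonneg _) hε h.le
    · simp only [abs_zero]
      positivity
  have hGint : Integrable G (volume.prod volume) := by
    apply Integrable.mono hBint hGmeas.aestronglyMeasurable
    exact Filter.Eventually.of_forall (fun p => (hGbound p).trans (le_abs_self _))
  have hGswapint : Integrable (G ∘ Prod.swap) (volume.prod volume) := hGint.swap
  have hmeasS : ∀ x : ℝ, MeasurableSet {y : ℝ | ε < |x - y|} := fun x =>
    measurableSet_lt measurable_const (measurable_const.sub measurable_id).abs
  -- step 1
  have eq1 : (∫ x : ℝ, x * f x * (∫ y in {y : ℝ | ε < |x - y|}, f y / (x - y)))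
      = ∫ p, G p ∂(volume.prod volume) := by
    rw [MeasureTheory.integral_prod G hGint]
    congr 1
    funext x
    rw [← MeasureTheory.integral_const_mul, ← MeasureTheory.integral_indicator (hmeasS x)]
    congr 1

  -- step 2 : swap
  have eq2 : (∫ p, G (Prod.swap p) ∂(volume.prod volume)) = ∫ p, G p ∂(volume.prod volume) :=
    MeasurePreserving.integral_comp Measure.measurePreserving_swap
      MeasurableEquiv.prodComm.measurableEmbedding G
  -- step 3 : pointwise sum
  have eq3 : (fun p : ℝ × ℝ => G p + G (Prod.swap p))
      = fun p : ℝ × ℝ => (if ε < |p.1 - p.2| then f p.1 * f p.2 else 0) := by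
    funext p
    rcases p with ⟨x, y⟩
    simp only [hG, Prod.swap_prod_mk]
    by_cases h : ε < |x - y|
    · have h' : ε < |y - x| := by rwa [abs_sub_comm]
      rw [if_pos h, if_pos h', if_pos h]
      have hxy : x - y ≠ 0 := by
        intro hh; rw [hh, abs_zero] at h; linarith
      have hyx : y - x ≠ 0 := by
        intro hh; rw [hh, abs_zero] at h'; linarith
      field_simp
      ring
    · have h' : ¬ ε < |y - x| := by rwa [abs_sub_comm]
      rw [if_neg h, if_neg h', if_neg h, add_zero]
  calc 2 * ∫ x : ℝ, x * f x * (∫ y in {y : ℝ | ε < |x - y|}, f y / (x - y))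
      = (∫ p, G p ∂(volume.prod volume)) + ∫ p, G (Prod.swap p) ∂(volume.prod volume) := by
        rw [eq1, eq2]; ring
    _ = ∫ p, (G p + G (Prod.swap p)) ∂(volume.prod volume) :=
        (MeasureTheory.integral_add hGint hGswapint).symm
    _ = ∫ p : ℝ × ℝ, (if ε < |p.1 - p.2| then f p.1 * f p.2 else 0) := by
        rw [eq3, ← Measure.volume_eq_prod]

lemma Klim (f : ℝ → ℝ) (hc : Continuous f) (hsupp : HasCompactSupport f) :
    Tendsto (fun ε : ℝ => ∫ p : ℝ × ℝ, (if ε < |p.1 - p.2| then f p.1 * f p.2 else 0))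
      (nhdsWithin 0 (Set.Ioi 0)) (nhds ((∫ x : ℝ, f x) ^ 2)) := by
  have hfint : Integrable f := hc.integrable_of_hasCompactSupport hsupp
  have hval : (∫ p : ℝ × ℝ, f p.1 * f p.2) = (∫ x : ℝ, f x) ^ 2 := by
    rw [Measure.volume_eq_prod, MeasureTheory.integral_prod_mul, sq]
  rw [← hval]
  apply MeasureTheory.tendsto_integral_filter_of_dominated_convergence
    (fun p : ℝ × ℝ => |f p.1| * |f p.2|)
  · apply Filter.Eventually.of_forall
    intro ε
    apply Measurable.aestronglyMeasurable
    apply Measurable.ite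
      (measurableSet_lt measurable_const (measurable_fst.sub measurable_snd).abs)
    · exact (hc.measurable.comp measurable_fst).mul (hc.measurable.comp measurable_snd)
    · exact measurable_const
  · apply Filter.Eventually.of_forall
    intro ε
    apply Filter.Eventually.of_forall
    intro p
    rw [Real.norm_eq_abs]
    split_ifs
    · rw [abs_mul]
    · simp only [abs_zero]; positivity
  · rw [Measure.volume_eq_prod]
    exact Integrable.mul_prod hfint.abs hfint.abs
  · have hdiag : (volume : Measure (ℝ × ℝ)) {p : ℝ × ℝ | p.1 = p.2} = 0 := by
      have hs : MeasurableSet {p : ℝ × ℝ | p.1 = p.2} :=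
        measurableSet_eq_fun measurable_fst measurable_snd
      rw [Measure.volume_eq_prod, Measure.measure_prod_null hs]
      apply Filter.Eventually.of_forall
      intro x
      have : Prod.mk x ⁻¹' {p : ℝ × ℝ | p.1 = p.2} = {x} := by
        ext y; simp [eq_comm]
      simp [this]
    have : ∀ᵐ p : ℝ × ℝ, p.1 ≠ p.2 := by
      rw [ae_iff]
      simpa using hdiag
    filter_upwards [this] with p hp
    have hd : 0 < |p.1 - p.2| := abs_pos.2 (sub_ne_zero.2 hp)
    apply Tendsto.congr' _ tendsto_const_nhds
    have hev : ∀ᶠ ε in nhdsWithin (0:ℝ) (Set.Ioi 0), ε < |p.1 - p.2| := by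
      have : Set.Ioo (0:ℝ) |p.1 - p.2| ∈ nhdsWithin (0:ℝ) (Set.Ioi 0) :=
        Ioo_mem_nhdsGT_of_mem ⟨le_refl 0, hd⟩
      filter_upwards [this] with ε hε using hε.2
    filter_upwards [hev] with ε hε
    rw [if_pos hε]



lemma inner_eq (f : ℝ → ℝ) (ε x : ℝ) :
    x * f x * (∫ y in {y : ℝ | ε < |x - y|}, f y / (x - y))
      = ∫ y : ℝ, (if ε < |x - y| then x * f x * (f y / (x - y)) else 0) := by
  rw [← MeasureTheory.integral_const_mul, ← MeasureTheory.integral_indicator (meas_S x ε)]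
  congr 1

lemma Blim (f H : ℝ → ℝ) (hc : Continuous f) (hsupp : HasCompactSupport f) (L M : ℝ)
    (hL : ∀ a b : ℝ, |f a - f b| ≤ L * |a - b|)
    (hM : ∀ y : ℝ, M < |y| → f y = 0) (hM0 : 0 < M)
    (hH : ∀ x : ℝ,
      Tendsto (fun ε : ℝ => (1 / Real.pi) * ∫ y in {y : ℝ | ε < |x - y|}, f y / (x - y))
        (nhdsWithin 0 (Set.Ioi 0)) (nhds (H x))) :
    Tendsto (fun ε : ℝ => ∫ x : ℝ, x * f x * (∫ y in {y : ℝ | ε < |x - y|}, f y / (x - y)))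
      (nhdsWithin 0 (Set.Ioi 0)) (nhds (Real.pi * ∫ x : ℝ, H x * x * f x)) := by
  have hπ : (0:ℝ) < Real.pi := Real.pi_pos
  have hxf : Continuous (fun x : ℝ => x * f x) := continuous_id.mul hc
  have hxfint : Integrable (fun x : ℝ => x * f x) :=
    hxf.integrable_of_hasCompactSupport (hsupp.mul_left)
  set C : ℝ := L * (2 * (2 * M + 1)) with hC
  have hval : (∫ x : ℝ, x * f x * (Real.pi * H x)) = Real.pi * ∫ x : ℝ, H x * x * f x := by
    rw [← MeasureTheory.integral_const_mul]
    congr 1; funext x; ring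
  rw [← hval]
  apply MeasureTheory.tendsto_integral_filter_of_dominated_convergence (fun x : ℝ => C * |x * f x|)
  · apply Filter.Eventually.of_forall
    intro ε
    have : (fun x : ℝ => x * f x * (∫ y in {y : ℝ | ε < |x - y|}, f y / (x - y)))
        = fun x : ℝ => ∫ y : ℝ, (if ε < |x - y| then x * f x * (f y / (x - y)) else 0) := by
      funext x; exact inner_eq f ε x
    rw [this]
    have hGmeas : Measurable (fun p : ℝ × ℝ =>
        if ε < |p.1 - p.2| then p.1 * f p.1 * (f p.2 / (p.1 - p.2)) else 0) := by
      apply Measurable.ite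
        (measurableSet_lt measurable_const ((measurable_fst.sub measurable_snd).abs))
      · exact ((measurable_fst.mul (hc.measurable.comp measurable_fst)).mul
          ((hc.measurable.comp measurable_snd).div (measurable_fst.sub measurable_snd)))
      · exact measurable_const
    exact (hGmeas.stronglyMeasurable.integral_prod_right').aestronglyMeasurable
  · apply Filter.Eventually.mono self_mem_nhdsWithin
    intro ε hε
    apply Filter.Eventually.of_forall
    intro x
    rw [Real.norm_eq_abs, abs_mul]
    by_cases hx : |x| ≤ M
    · rw [mul_comm C _]
      exact mul_le_mul_of_nonneg_left
        (uniform_bound f hc L M hL hM hM0 ε hε x hx) (abs_nonneg _)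
    · push_neg at hx
      rw [hM x hx, mul_zero, abs_zero, zero_mul, mul_zero]
  · exact (hxfint.abs.const_mul C)
  · apply Filter.Eventually.of_forall
    intro x
    have h1 := (hH x).const_mul Real.pi
    have heq : (fun ε : ℝ => Real.pi * ((1 / Real.pi) *
        ∫ y in {y : ℝ | ε < |x - y|}, f y / (x - y)))
        = fun ε : ℝ => ∫ y in {y : ℝ | ε < |x - y|}, f y / (x - y) := by
      funext ε
      rw [← mul_assoc, mul_one_div, div_self hπ.ne', one_mul]
    rw [heq] at h1
    exact h1.const_mul (x * f x)

open MeasureTheory Filter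

/-- **Hilbert transform identity II.**
If `f : ℝ → ℝ` is a smooth compactly supported function such that for every `x` the
principal-value limit defining the Hilbert transform
`H[f](x) = (1/π) lim_{ε→0⁺} ∫_{|x−y|>ε} f(y)/(x−y) dy` exists (with value `H x`), then
`∫ H[f](x) · x · f(x) dx = (1/(2π)) (∫ f(x) dx)²`. -/
theorem hilbert_transform_x_identity
    (f : ℝ → ℝ) (hf : ContDiff ℝ (⊤ : ℕ∞) f) (hsupp : HasCompactSupport f)
    (H : ℝ → ℝ)
    (hH : ∀ x : ℝ,
      Tendsto (fun ε : ℝ => (1 / Real.pi) * ∫ y in {y : ℝ | ε < |x - y|}, f y / (x - y))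
        (nhdsWithin 0 (Set.Ioi 0)) (nhds (H x))) :
    ∫ x : ℝ, H x * x * f x = (1 / (2 * Real.pi)) * (∫ x : ℝ, f x) ^ 2 := by
  have hc : Continuous f := hf.continuous
  obtain ⟨L, hL⟩ := lip_of f hf hsupp
  obtain ⟨M, hM0, hM⟩ : ∃ M : ℝ, 0 < M ∧ ∀ y : ℝ, M < |y| → f y = 0 := by
    obtain ⟨r, hr⟩ := hsupp.isCompact.isBounded.subset_closedBall 0
    refine ⟨max r 1, lt_of_lt_of_le one_pos (le_max_right _ _), fun y hy => ?_⟩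
    apply image_eq_zero_of_notMem_tsupport
    intro hmem
    have h1 := hr hmem
    rw [Metric.mem_closedBall, Real.dist_eq, sub_zero] at h1
    have : |y| ≤ max r 1 := le_trans h1 (le_max_left _ _)
    linarith
  have hπ : (0:ℝ) < Real.pi := Real.pi_pos
  set A : ℝ := ∫ x : ℝ, H x * x * f x with hA
  have hB := Blim f H hc hsupp L M hL hM hM0 hH
  have h2B : Tendsto (fun ε : ℝ =>
      2 * ∫ x : ℝ, x * f x * (∫ y in {y : ℝ | ε < |x - y|}, f y / (x - y)))
      (nhdsWithin 0 (Set.Ioi 0)) (nhds (2 * (Real.pi * A))) := hB.const_mul 2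
  have hcongr : (fun ε : ℝ =>
      2 * ∫ x : ℝ, x * f x * (∫ y in {y : ℝ | ε < |x - y|}, f y / (x - y)))
      =ᶠ[nhdsWithin (0:ℝ) (Set.Ioi 0)]
      (fun ε : ℝ => ∫ p : ℝ × ℝ, (if ε < |p.1 - p.2| then f p.1 * f p.2 else 0)) := by
    apply Filter.Eventually.mono self_mem_nhdsWithin
    intro ε hε
    exact sym_step f hc hsupp ε hε
  have hK := Klim f hc hsupp
  have huniq : 2 * (Real.pi * A) = (∫ x : ℝ, f x) ^ 2 :=
    tendsto_nhds_unique (h2B.congr' hcongr) hK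
  rw [hA] at huniq ⊢
  field_simp
  linarith
end

section
/- For all real numbers A and B with A > 2|B|, (1/(2π)) ∫_{−2}^{2} ln(A − Bx) √(4 − x²) dx = A/(A + √(A² − 4B²)) + ln(A + √(A² − 4B²)) − 1/2 − ln 2. -/
open intervalIntegral

lemma intCos (m : ℤ) : (∫ θ in (0:ℝ)..Real.pi, Real.cos (m * θ)) = if m = 0 then Real.pi else 0 := by
  rcases eq_or_ne m 0 with rfl | hm
  · simp
  · have hm' : (m : ℝ) ≠ 0 := Int.cast_ne_zero.mpr hm
    rw [if_neg hm]
    have := intervalIntegral.integral_comp_mul_left (fun x => Real.cos x) hm'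
      (a := 0) (b := Real.pi)
    simp only [integral_cos] at this
    rw [this]
    simp [Real.sin_int_mul_pi]

lemma cosSinSq (n : ℕ) :
    (∫ θ in (0:ℝ)..Real.pi, Real.cos (n * θ) * Real.sin θ ^ 2) =
      if n = 2 then -(Real.pi/4) else if n = 0 then Real.pi/2 else 0 := by
  have key : ∀ θ : ℝ, Real.cos (n * θ) * Real.sin θ ^ 2 =
      Real.cos (((n : ℤ) : ℝ) * θ) / 2 - Real.cos ((((n : ℤ) + 2 : ℤ) : ℝ) * θ) / 4
        - Real.cos ((((n : ℤ) - 2 : ℤ) : ℝ) * θ) / 4 := by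
    intro θ
    push_cast
    have h1 : Real.cos (((n:ℝ) + 2) * θ) = Real.cos ((n:ℝ)*θ + 2*θ) := by ring_nf
    have h2 : Real.cos (((n:ℝ) - 2) * θ) = Real.cos ((n:ℝ)*θ - 2*θ) := by ring_nf
    rw [h1, h2, Real.cos_add, Real.cos_sub, Real.cos_two_mul, Real.sin_two_mul]
    have := Real.sin_sq_add_cos_sq θ
    linear_combination Real.cos ((n:ℝ)*θ) * this
  have hInt : ∀ (c : ℝ), IntervalIntegrable (fun θ => Real.cos (c*θ))
      MeasureTheory.volume 0 Real.pi :=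
    fun c => Continuous.intervalIntegrable (by fun_prop) 0 Real.pi
  rw [intervalIntegral.integral_congr (g := fun θ =>
      Real.cos (((n : ℤ) : ℝ) * θ) / 2 - Real.cos ((((n : ℤ) + 2 : ℤ) : ℝ) * θ) / 4
        - Real.cos ((((n : ℤ) - 2 : ℤ) : ℝ) * θ) / 4) (fun θ _ => key θ)]
  rw [intervalIntegral.integral_sub (((hInt _).div_const 2).sub ((hInt _).div_const 4))
      ((hInt _).div_const 4),
    intervalIntegral.integral_sub ((hInt _).div_const 2) ((hInt _).div_const 4),
    intervalIntegral.integral_div, intervalIntegral.integral_div,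
    intervalIntegral.integral_div, intCos, intCos, intCos]
  rcases eq_or_ne n 2 with rfl | h2
  · norm_num
  · rcases eq_or_ne n 0 with rfl | h0
    · norm_num
    · have e1 : ((n:ℤ)) ≠ 0 := by omega
      have e2 : ((n:ℤ) + 2) ≠ 0 := by omega
      have e3 : ((n:ℤ) - 2) ≠ 0 := by omega
      simp [h0, h2, e1, e2, e3]

lemma normSq_one_sub (t θ : ℝ) :
    Complex.normSq (1 - (t : ℂ) * Complex.exp (θ * Complex.I))
      = 1 - 2 * t * Real.cos θ + t ^ 2 := by
  have h1 : (1 - (t : ℂ) * Complex.exp (θ * Complex.I)).re = 1 - t * Real.cos θ := by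
    simp [Complex.exp_ofReal_mul_I_re]
  have h2 : (1 - (t : ℂ) * Complex.exp (θ * Complex.I)).im = -(t * Real.sin θ) := by
    simp [Complex.exp_ofReal_mul_I_im]
  rw [Complex.normSq_apply, h1, h2]
  have := Real.sin_sq_add_cos_sq θ
  nlinarith [this]

lemma hasSum_log_poisson {t : ℝ} (ht : |t| < 1) (θ : ℝ) :
    HasSum (fun n : ℕ => -2 * (t ^ n * Real.cos (n * θ) / n))
      (Real.log (1 - 2 * t * Real.cos θ + t ^ 2)) := by
  set w : ℂ := (t : ℂ) * Complex.exp (θ * Complex.I) with hw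
  have hwnorm : ‖w‖ < 1 := by
    rw [hw, norm_mul]
    simpa [Complex.norm_exp_ofReal_mul_I] using ht
  have hre := Complex.reCLM.hasSum (Complex.hasSum_taylorSeries_neg_log hwnorm)
  simp only [Complex.reCLM_apply, ContinuousLinearMap.coe_coe] at hre
  have hterm : ∀ n : ℕ, (w ^ n / (n : ℂ)).re = t ^ n * Real.cos (n * θ) / n := by
    intro n
    have e1 : w ^ n = ((t ^ n : ℝ) : ℂ) * Complex.exp (((n * θ : ℝ)) * Complex.I) := by
      rw [hw, mul_pow, ← Complex.exp_nat_mul]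
      push_cast
      ring_nf
    have e2 : ((n : ℂ)) = ((n : ℝ) : ℂ) := by push_cast; rfl
    rw [e1, e2, Complex.div_ofReal_re, Complex.re_ofReal_mul, Complex.exp_ofReal_mul_I_re]
  have hre' : HasSum (fun n : ℕ => t ^ n * Real.cos (n * θ) / n)
      (-(Complex.log (1 - w)).re) := by
    simpa only [hterm, Complex.neg_re] using hre
  have hfin := hre'.mul_left (-2)
  convert hfin using 1
  case e'_3 => rfl
  have hlr : (Complex.log (1 - w)).re = Real.log ‖1 - w‖ := Complex.log_re _
  have hp : Real.log (‖1 - w‖ ^ 2) = 2 * Real.log ‖1 - w‖ := by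
    rw [Real.log_pow]; norm_num
  have habs2 : ‖1 - w‖ ^ 2 = 1 - 2 * t * Real.cos θ + t ^ 2 := by
    rw [Complex.sq_norm, hw, normSq_one_sub]
  rw [habs2] at hp
  rw [hp, hlr]
  ring

lemma logInt {t : ℝ} (ht : |t| < 1) :
    (∫ θ in (0:ℝ)..Real.pi,
        Real.log (1 - 2 * t * Real.cos θ + t ^ 2) * (4 * Real.sin θ ^ 2))
      = Real.pi * t ^ 2 := by
  have habs : 0 ≤ |t| := abs_nonneg t
  have hsummable : Summable (fun n : ℕ => 8 * |t| ^ n / n) := by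
    apply Summable.of_nonneg_of_le (fun n => by positivity)
      (fun n => ?_) ((summable_geometric_of_lt_one habs ht).mul_left 8)
    rcases Nat.eq_zero_or_pos n with rfl | hn
    · simp
    · apply div_le_self (by positivity)
      exact_mod_cast hn
  have hsum := intervalIntegral.hasSum_integral_of_dominated_convergence
    (μ := MeasureTheory.volume) (a := (0:ℝ)) (b := Real.pi)
    (F := fun (n : ℕ) (θ : ℝ) => -2 * (t ^ n * Real.cos (n * θ) / n) * (4 * Real.sin θ ^ 2))
    (f := fun θ => Real.log (1 - 2 * t * Real.cos θ + t ^ 2) * (4 * Real.sin θ ^ 2))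
    (bound := fun n _ => 8 * |t| ^ n / n)
    (fun n => (Continuous.aestronglyMeasurable (by fun_prop)))
    (fun n => MeasureTheory.ae_of_all _ (fun θ _ => by
      have hc : |Real.cos (n * θ)| ≤ 1 := Real.abs_cos_le_one _
      have hs : Real.sin θ ^ 2 ≤ 1 := Real.sin_sq_le_one θ
      have h1 : ‖-2 * (t ^ n * Real.cos (n * θ) / n) * (4 * Real.sin θ ^ 2)‖
          = 8 * (|t| ^ n * |Real.cos (n * θ)| / n) * Real.sin θ ^ 2 := by
        rw [Real.norm_eq_abs, abs_mul, abs_mul, abs_mul, abs_div, abs_mul, abs_pow]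
        simp [abs_of_nonneg (sq_nonneg (Real.sin θ)), Nat.abs_cast]
        ring
      rw [h1]
      calc 8 * (|t| ^ n * |Real.cos (n * θ)| / n) * Real.sin θ ^ 2
          ≤ 8 * (|t| ^ n * 1 / n) * 1 := by gcongr
        _ = 8 * |t| ^ n / n := by ring))
    (MeasureTheory.ae_of_all _ (fun θ _ => hsummable))
    intervalIntegrable_const
    (MeasureTheory.ae_of_all _ (fun θ _ => (hasSum_log_poisson ht θ).mul_right _))
  have heval : (fun n : ℕ => ∫ θ in (0:ℝ)..Real.pi,
      -2 * (t ^ n * Real.cos (n * θ) / n) * (4 * Real.sin θ ^ 2))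
      = fun n : ℕ => if n = 2 then Real.pi * t ^ 2 else 0 := by
    funext n
    have : (∫ θ in (0:ℝ)..Real.pi,
          -2 * (t ^ n * Real.cos (n * θ) / n) * (4 * Real.sin θ ^ 2))
        = (-8 * t ^ n / n) * ∫ θ in (0:ℝ)..Real.pi, Real.cos (n * θ) * Real.sin θ ^ 2 := by
      rw [← intervalIntegral.integral_const_mul]
      apply intervalIntegral.integral_congr
      intro θ _
      ring
    rw [this, cosSinSq]
    rcases eq_or_ne n 2 with rfl | h2
    · norm_num; ring
    · rcases eq_or_ne n 0 with rfl | h0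
      · simp
      · simp [h0, h2]
  rw [heval] at hsum
  simpa using hsum.unique (hasSum_ite_eq 2 (Real.pi * t ^ 2))

set_option maxHeartbeats 1000000 in
/-- **A semicircle log-integral.**
For all real `A`, `B` with `A > 2|B|`,
`(1/(2π)) ∫_{−2}^{2} ln(A − Bx) √(4 − x²) dx
  = A/(A + √(A² − 4B²)) + ln(A + √(A² − 4B²)) − 1/2 − ln 2`. -/
theorem semicircle_log_integral (A B : ℝ) (h : 2 * |B| < A) :
    (1 / (2 * Real.pi)) * ∫ x in (-2 : ℝ)..2, Real.log (A - B * x) * Real.sqrt (4 - x ^ 2) =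
      A / (A + Real.sqrt (A ^ 2 - 4 * B ^ 2)) + Real.log (A + Real.sqrt (A ^ 2 - 4 * B ^ 2))
        - 1 / 2 - Real.log 2 := by
  have hB0 : (0:ℝ) ≤ 2 * |B| := by positivity
  have hA : 0 < A := lt_of_le_of_lt hB0 h
  have hABsq : 0 ≤ A ^ 2 - 4 * B ^ 2 := by
    have h2 : (2 * |B|) ^ 2 < A ^ 2 := by nlinarith
    nlinarith [sq_abs B]
  set s := Real.sqrt (A ^ 2 - 4 * B ^ 2) with hsdef
  have hs0 : 0 ≤ s := Real.sqrt_nonneg _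
  have hs2 : s ^ 2 = A ^ 2 - 4 * B ^ 2 := Real.sq_sqrt hABsq
  clear_value s
  set r := A + s with hrdef
  have hr : 0 < r := by positivity
  have hrne : r ≠ 0 := ne_of_gt hr
  have hrB : 2 * |B| < r := lt_of_lt_of_le h (by simp [hrdef, hs0])
  have hr2 : r ^ 2 = 2 * A * r - 4 * B ^ 2 := by
    rw [hrdef]; linear_combination hs2
  clear_value r
  set t := 2 * B / r with htdef
  have ht : |t| < 1 := by
    rw [htdef, abs_div, abs_of_pos hr, div_lt_one hr]
    calc |2 * B| = 2 * |B| := by rw [abs_mul]; norm_num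
      _ < r := hrB
  set c := r / 2 with hcdef
  have hc : 0 < c := by rw [hcdef]; positivity
  have hct : c * t = B := by
    rw [hcdef, htdef]; field_simp
  have hct2 : c * t ^ 2 = 2 * B ^ 2 / r := by
    rw [hcdef, htdef]; field_simp
  have hc2 : c + 2 * B ^ 2 / r = A := by
    rw [hcdef]; field_simp; linear_combination hr2
  clear_value t c
  have hlin : ∀ u : ℝ, c * (1 - 2 * t * u + t ^ 2) = A - 2 * B * u := by
    intro u
    linear_combination (-2*u) * hct + hct2 + hc2
  have hpos : ∀ θ : ℝ, 0 < 1 - 2 * t * Real.cos θ + t ^ 2 := by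
    intro θ
    have h1 : t * Real.cos θ ≤ |t| := by
      calc t * Real.cos θ ≤ |t * Real.cos θ| := le_abs_self _
        _ = |t| * |Real.cos θ| := abs_mul _ _
        _ ≤ |t| * 1 := by gcongr; exact Real.abs_cos_le_one θ
        _ = |t| := by ring
    nlinarith [sq_nonneg (1 - |t|), sq_abs t, abs_nonneg t]
  -- substitution x = 2 cos θ
  have hsub : (∫ x in (-2 : ℝ)..2, Real.log (A - B * x) * Real.sqrt (4 - x ^ 2))
      = ∫ θ in (0:ℝ)..Real.pi, Real.log (A - 2 * B * Real.cos θ) * (4 * Real.sin θ ^ 2) := by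
    have hgS : ContinuousOn (fun x => Real.log (A - B * x) * Real.sqrt (4 - x ^ 2))
        (Set.Icc (-2:ℝ) 2) := by
      apply ContinuousOn.mul
      · apply ContinuousOn.log (by fun_prop)
        intro x hx
        have hx2 : |x| ≤ 2 := abs_le.mpr ⟨hx.1, hx.2⟩
        have hBx : |B * x| ≤ 2 * |B| := by
          rw [abs_mul]; nlinarith [abs_nonneg B]
        have : B * x < A := lt_of_le_of_lt (le_trans (le_abs_self _) hBx) h
        linarith
      · fun_prop
    have himg : (fun θ => 2 * Real.cos θ) '' (Set.uIcc Real.pi 0) ⊆ Set.Icc (-2:ℝ) 2 := by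
      rintro x ⟨θ, -, rfl⟩
      dsimp only
      exact Set.mem_Icc.mpr ⟨by nlinarith [Real.neg_one_le_cos θ],
        by nlinarith [Real.cos_le_one θ]⟩
    have key := intervalIntegral.integral_comp_smul_deriv' (a := Real.pi) (b := 0)
      (f := fun θ => 2 * Real.cos θ) (f' := fun θ => -2 * Real.sin θ)
      (g := fun x => Real.log (A - B * x) * Real.sqrt (4 - x ^ 2))
      (fun θ _ => by simpa [mul_comm, neg_mul] using (Real.hasDerivAt_cos θ).const_mul 2)
      (by fun_prop) (hgS.mono himg)
    norm_num [Real.cos_pi, Real.cos_zero] at key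
    rw [← key, intervalIntegral.integral_symm, neg_neg]
    apply intervalIntegral.integral_congr
    intro θ hθ
    have hθ' : θ ∈ Set.Icc (0:ℝ) Real.pi := by
      rwa [Set.uIcc_of_le Real.pi_nonneg] at hθ
    have hsin : 0 ≤ Real.sin θ := Real.sin_nonneg_of_nonneg_of_le_pi hθ'.1 hθ'.2
    have hsqrt : Real.sqrt (4 - (2 * Real.cos θ) ^ 2) = 2 * Real.sin θ := by
      have h4 : 4 - (2 * Real.cos θ) ^ 2 = (2 * Real.sin θ) ^ 2 := by
        nlinarith [Real.sin_sq_add_cos_sq θ]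
      rw [h4, Real.sqrt_sq_eq_abs, abs_of_nonneg (by linarith)]
    simp only [Function.comp, smul_eq_mul]
    rw [hsqrt, show A - B * (2 * Real.cos θ) = A - 2 * B * Real.cos θ from by ring]
    ring
  -- split the log and integrate
  have hθint : (∫ θ in (0:ℝ)..Real.pi,
      Real.log (A - 2 * B * Real.cos θ) * (4 * Real.sin θ ^ 2))
      = 2 * Real.pi * Real.log c + Real.pi * t ^ 2 := by
    have hcongr : ∀ θ ∈ Set.uIcc (0:ℝ) Real.pi,
        Real.log (A - 2 * B * Real.cos θ) * (4 * Real.sin θ ^ 2)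
          = Real.log c * (4 * Real.sin θ ^ 2)
            + Real.log (1 - 2 * t * Real.cos θ + t ^ 2) * (4 * Real.sin θ ^ 2) := by
      intro θ _
      rw [← hlin (Real.cos θ), Real.log_mul (ne_of_gt hc) (ne_of_gt (hpos θ))]
      ring
    rw [intervalIntegral.integral_congr hcongr]
    have hi1 : IntervalIntegrable (fun θ => Real.log c * (4 * Real.sin θ ^ 2))
        MeasureTheory.volume 0 Real.pi := Continuous.intervalIntegrable (by fun_prop) _ _
    have hi2 : IntervalIntegrable
        (fun θ => Real.log (1 - 2 * t * Real.cos θ + t ^ 2) * (4 * Real.sin θ ^ 2))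
        MeasureTheory.volume 0 Real.pi := by
      apply ContinuousOn.intervalIntegrable
      apply ContinuousOn.mul
      · exact ContinuousOn.log (by fun_prop) (fun θ _ => ne_of_gt (hpos θ))
      · fun_prop
    rw [intervalIntegral.integral_add hi1 hi2, logInt ht,
      intervalIntegral.integral_const_mul]
    have h4s : (∫ θ in (0:ℝ)..Real.pi, 4 * Real.sin θ ^ 2) = 2 * Real.pi := by
      rw [intervalIntegral.integral_const_mul, integral_sin_sq]
      norm_num [Real.sin_pi]
      ring
    rw [h4s]
    ring
  rw [hsub, hθint]
  have hπ : Real.pi ≠ 0 := Real.pi_ne_zero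
  have hlogc : Real.log c = Real.log r - Real.log 2 := by
    rw [hcdef, Real.log_div hrne two_ne_zero]
  have ht2 : t ^ 2 / 2 = A / r - 1 / 2 := by
    rw [htdef]
    field_simp
    linear_combination hr2
  have hval : (1 / (2 * Real.pi)) * (2 * Real.pi * Real.log c + Real.pi * t ^ 2)
      = Real.log c + t ^ 2 / 2 := by
    field_simp
  rw [hval, hlogc]
  linarith [ht2]
end

section
/- For every real z > 2, ∫_{−2}^{2} (√(4 − x²)/(2π)) · (1/(z − x)) dx = (z − √(z² − 4))/2. -/
open intervalIntegral

open Real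

noncomputable def scF (z : ℝ) : ℝ → ℝ := fun x =>
  z * Real.arcsin (x / 2) - Real.sqrt (4 - x ^ 2)
    + Real.sqrt (z ^ 2 - 4) * Real.arcsin ((4 - z * x) / (2 * (z - x)))

set_option maxHeartbeats 1000000 in
lemma scF_deriv (z : ℝ) (hz : 2 < z) {x : ℝ} (hx : x ∈ Set.Ioo (-2 : ℝ) 2) :
    HasDerivAt (scF z) (Real.sqrt (4 - x ^ 2) / (z - x)) x := by
  obtain ⟨hx1, hx2⟩ := hx
  have hzx : 0 < z - x := by linarith
  have h4 : 0 < 4 - x ^ 2 := by nlinarith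
  have hs2pos : 0 < z ^ 2 - 4 := by nlinarith
  set b := Real.sqrt (4 - x ^ 2) with hbdef
  set s := Real.sqrt (z ^ 2 - 4) with hsdef
  have hb : 0 < b := Real.sqrt_pos.mpr h4
  have hs : 0 < s := Real.sqrt_pos.mpr hs2pos
  have hb2 : b ^ 2 = 4 - x ^ 2 := Real.sq_sqrt h4.le
  have hs2 : s ^ 2 = z ^ 2 - 4 := Real.sq_sqrt hs2pos.le
  -- a = sqrt (1 - (x/2)^2)
  set a := Real.sqrt (1 - (x / 2) ^ 2) with hadef
  have ha4 : 0 < 1 - (x / 2) ^ 2 := by nlinarith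
  have ha : 0 < a := Real.sqrt_pos.mpr ha4
  have ha2 : a ^ 2 = 1 - (x / 2) ^ 2 := Real.sq_sqrt ha4.le
  have hba : b = 2 * a := by
    nlinarith [hb.le, ha.le, hb2, ha2]
  -- u and its properties
  set u := (4 - z * x) / (2 * (z - x)) with hudef
  have hu2 : 1 - u ^ 2 = (z ^ 2 - 4) * (4 - x ^ 2) / (4 * (z - x) ^ 2) := by
    rw [hudef]
    field_simp [hudef]
    ring
  have hu2pos : 0 < 1 - u ^ 2 := by
    rw [hu2]; positivity
  have hune1 : u ≠ 1 := by intro h; rw [h] at hu2pos; norm_num at hu2pos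
  have hunem1 : u ≠ -1 := by intro h; rw [h] at hu2pos; norm_num at hu2pos
  set c := Real.sqrt (1 - u ^ 2) with hcdef
  have hc : 0 < c := Real.sqrt_pos.mpr hu2pos
  have hc2 : c ^ 2 = 1 - u ^ 2 := Real.sq_sqrt hu2pos.le
  have hcsb : 2 * (z - x) * c = s * b := by
    have h1 : (2 * (z - x) * c) ^ 2 = (s * b) ^ 2 := by
      have e2 : (s * b) ^ 2 = s ^ 2 * b ^ 2 := by ring
      rw [mul_pow, hc2, e2, hs2, hb2, hu2]
      field_simp
      ring
    nlinarith [mul_pos hs hb, mul_pos (mul_pos two_pos hzx) hc]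
  -- term 1
  have hx21 : x / 2 ≠ -1 := fun h => absurd (by linarith : x = -2) (by linarith)
  have hx21' : x / 2 ≠ 1 := fun h => absurd (by linarith : x = 2) (by linarith)
  have T1 : HasDerivAt (fun y : ℝ => Real.arcsin (y / 2)) (1 / a * (1 / 2)) x := by
    have inner : HasDerivAt (fun y : ℝ => y / 2) (1 / 2) x := by
      simpa using (hasDerivAt_id x).div_const 2
    have := (Real.hasDerivAt_arcsin hx21 hx21').comp x inner
    exact this
  -- term 2
  have T2 : HasDerivAt (fun y : ℝ => Real.sqrt (4 - y ^ 2)) (-(2 * x) / (2 * b)) x := by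
    have inner : HasDerivAt (fun y : ℝ => 4 - y ^ 2) (-(2 * x)) x := by
      have := ((hasDerivAt_pow 2 x).const_sub 4)
      simpa using this
    have := inner.sqrt h4.ne'
    simpa [hbdef] using this
  -- term 3
  have Tu : HasDerivAt (fun y : ℝ => (4 - z * y) / (2 * (z - y)))
      ((-z * (2 * (z - x)) - (4 - z * x) * (2 * (-1))) / (2 * (z - x)) ^ 2) x := by
    have hn : HasDerivAt (fun y : ℝ => 4 - z * y) (-z) x := by
      have := ((hasDerivAt_id x).const_mul z).const_sub 4
      simpa using this
    have hd : HasDerivAt (fun y : ℝ => 2 * (z - y)) (2 * (-1)) x := by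
      have := ((hasDerivAt_id x).const_sub z).const_mul 2
      simpa using this
    exact hn.div hd (by positivity)
  have T3 : HasDerivAt (fun y : ℝ => Real.arcsin ((4 - z * y) / (2 * (z - y))))
      (1 / c * ((-z * (2 * (z - x)) - (4 - z * x) * (2 * (-1))) / (2 * (z - x)) ^ 2)) x := by
    have := (Real.hasDerivAt_arcsin hunem1 hune1).comp x Tu
    exact this
  have key : HasDerivAt (scF z)
      (z * (1 / a * (1 / 2)) - -(2 * x) / (2 * b)
        + s * (1 / c * ((-z * (2 * (z - x)) - (4 - z * x) * (2 * (-1))) / (2 * (z - x)) ^ 2))) x :=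
    ((T1.const_mul z).sub T2).add (T3.const_mul s)
  convert key using 1
  have hc' : c = s * b / (2 * (z - x)) := by
    rw [eq_div_iff (by positivity : (2 * (z - x)) ≠ 0)]
    linarith [hcsb]
  rw [hc', hba]
  field_simp
  ring_nf
  linear_combination 4 * ha2

lemma scF_cont (z : ℝ) (hz : 2 < z) : ContinuousOn (scF z) (Set.Icc (-2 : ℝ) 2) := by
  unfold scF
  apply ContinuousOn.add
  · apply ContinuousOn.sub
    · exact (continuous_const.mul (Real.continuous_arcsin.comp
        (continuous_id.div_const 2))).continuousOn
    · exact ((continuous_const.sub (continuous_pow 2)).sqrt).continuousOn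
  · apply ContinuousOn.mul continuousOn_const
    apply Real.continuous_arcsin.comp_continuousOn
    apply ContinuousOn.div
    · exact (continuous_const.sub (continuous_const.mul continuous_id)).continuousOn
    · exact (continuous_const.mul (continuous_const.sub continuous_id)).continuousOn
    · intro x hx
      have h2 : x ≤ 2 := hx.2
      have : (0:ℝ) < 2 * (z - x) := by nlinarith
      exact this.ne'

lemma semicircle_aux (z : ℝ) (hz : 2 < z) :
    (∫ x in (-2 : ℝ)..2, Real.sqrt (4 - x ^ 2) / (z - x)) =
      Real.pi * (z - Real.sqrt (z ^ 2 - 4)) := by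
  have hint : IntervalIntegrable (fun x => Real.sqrt (4 - x ^ 2) / (z - x))
      MeasureTheory.volume (-2 : ℝ) 2 := by
    apply ContinuousOn.intervalIntegrable
    rw [Set.uIcc_of_le (by norm_num)]
    apply ContinuousOn.div
    · exact ((continuous_const.sub (continuous_pow 2)).sqrt).continuousOn
    · exact (continuous_const.sub continuous_id).continuousOn
    · intro x hx
      have h2 : x ≤ 2 := hx.2
      have : (0:ℝ) < z - x := by nlinarith
      exact this.ne'
  have hFTC := intervalIntegral.integral_eq_sub_of_hasDeriv_right_of_le
    (by norm_num : (-2:ℝ) ≤ 2) (scF_cont z hz)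
    (fun x hx => (scF_deriv z hz hx).hasDerivWithinAt) hint
  rw [hFTC]
  have hs0 : Real.sqrt (4 - (2:ℝ) ^ 2) = 0 := by norm_num
  have hs0' : Real.sqrt (4 - (-2:ℝ) ^ 2) = 0 := by norm_num
  have hu2 : (4 - z * 2) / (2 * (z - 2)) = -1 := by
    rw [div_eq_iff (by nlinarith : (2 * (z - 2)) ≠ 0)]; ring
  have hum2 : (4 - z * (-2)) / (2 * (z - (-2))) = 1 := by
    rw [div_eq_iff (by nlinarith : (2 * (z - (-2))) ≠ 0)]; ring
  unfold scF
  rw [hs0, hs0', hu2, hum2]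
  norm_num [Real.arcsin_one, Real.arcsin_neg_one]
  ring


/-- **Cauchy transform of the semicircle law.**
For every real `z > 2`,
`∫_{−2}^{2} (√(4 − x²)/(2π)) · (1/(z − x)) dx = (z − √(z² − 4))/2`. -/
theorem semicircle_cauchy_transform (z : ℝ) (hz : 2 < z) :
    (∫ x in (-2 : ℝ)..2, (Real.sqrt (4 - x ^ 2) / (2 * Real.pi)) * (1 / (z - x))) =
      (z - Real.sqrt (z ^ 2 - 4)) / 2 := by
  have h1 : (∫ x in (-2 : ℝ)..2, (Real.sqrt (4 - x ^ 2) / (2 * Real.pi)) * (1 / (z - x)))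
      = ∫ x in (-2 : ℝ)..2, (2 * Real.pi)⁻¹ * (Real.sqrt (4 - x ^ 2) / (z - x)) :=
    intervalIntegral.integral_congr (fun x _ => by ring)
  rw [h1, intervalIntegral.integral_const_mul, semicircle_aux z hz]
  have hpi : Real.pi ≠ 0 := Real.pi_ne_zero
  field_simp
end

section
/- Let N ≥ 1 and u, v ∈ ℝ^N. Then the infimum over all N×N doubly stochastic matrices P of (1/N) Σ_{i,j} P_{ij} (u_i − v_j)² is attained, and it equals the minimum over all permutations π of {1,…,N} of (1/N) Σ_i (u_i − v_{π(i)})². -/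
/-!
The cost `P ↦ ∑ i j, P i j * (u i - v j) ^ 2` is linear in `P`, and by Birkhoff's theorem the
doubly stochastic matrices are the convex hull of the permutation matrices. A linear function is
concave, so by the minimum principle its infimum over the convex hull is attained at one of the
permutation matrices, on which the cost reduces to `∑ i, (u i - v (π i)) ^ 2`.
-/

open Finset

namespace Matrix

variable {n R : Type*} [Fintype n]

def transportCost [CommSemiring R] (C : Matrix n n R) : Matrix n n R →ₗ[R] R where
  toFun P := ∑ i, ∑ j, P i j * C i j
  map_add' P Q := by simp only [add_apply, add_mul, sum_add_distrib]
  map_smul' c P := by simp only [smul_apply, smul_eq_mul, mul_assoc, ← mul_sum, RingHom.id_apply]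

variable [DecidableEq n]

theorem transportCost_permMatrix [CommSemiring R] (C : Matrix n n R) (σ : Equiv.Perm n) :
    transportCost C (σ.permMatrix R) = ∑ i, C i (σ i) := by
  simp [transportCost, Equiv.Perm.permMatrix, PEquiv.toMatrix_apply, Equiv.toPEquiv_apply,
    eq_comm (a := σ _)]

theorem exists_perm_le_transportCost [Field R] [LinearOrder R] [IsStrictOrderedRing R]
    (C : Matrix n n R) {P : Matrix n n R} (hP : P ∈ doublyStochastic R n) :
    ∃ σ : Equiv.Perm n, ∑ i, C i (σ i) ≤ transportCost C P := by
  rw [← SetLike.mem_coe, doublyStochastic_eq_convexHull_permMatrix] at hP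
  obtain ⟨_, ⟨σ, rfl⟩, hσ⟩ :=
    ((transportCost C).concaveOn convex_univ).exists_le_of_mem_convexHull (Set.subset_univ _) hP
  exact ⟨σ, transportCost_permMatrix C σ ▸ hσ⟩

end Matrix

theorem doublyStochastic_min_eq_perm_min_general (N : ℕ) (u v : Fin N → ℝ) :
    ∃ m : ℝ,
      IsLeast {c : ℝ | ∃ P : Matrix (Fin N) (Fin N) ℝ,
          (∀ i j, 0 ≤ P i j) ∧ (∀ i, ∑ j, P i j = 1) ∧ (∀ j, ∑ i, P i j = 1) ∧
          c = (1 / (N : ℝ)) * ∑ i, ∑ j, P i j * (u i - v j) ^ 2} m ∧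
      IsLeast {c : ℝ | ∃ π : Equiv.Perm (Fin N),
          c = (1 / (N : ℝ)) * ∑ i, (u i - v (π i)) ^ 2} m := by
  set C : Matrix (Fin N) (Fin N) ℝ := Matrix.of fun i j => (u i - v j) ^ 2
  obtain ⟨π₀, -, hπ₀⟩ :=
    exists_min_image univ (fun π : Equiv.Perm (Fin N) => ∑ i, C i (π i)) univ_nonempty
  refine ⟨1 / N * ∑ i, C i (π₀ i), ⟨?_, ?_⟩, ⟨π₀, rfl⟩, ?_⟩
  · obtain ⟨h₀, h₁, h₂⟩ :=
      mem_doublyStochastic_iff_sum.1 (permMatrix_mem_doublyStochastic (R := ℝ) (σ := π₀))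
    exact ⟨π₀.permMatrix ℝ, h₀, h₁, h₂, by rw [← Matrix.transportCost_permMatrix]; rfl⟩
  · rintro c ⟨P, h₀, h₁, h₂, rfl⟩
    obtain ⟨σ, hσ⟩ :=
      Matrix.exists_perm_le_transportCost C (mem_doublyStochastic_iff_sum.2 ⟨h₀, h₁, h₂⟩)
    exact mul_le_mul_of_nonneg_left ((hπ₀ σ (mem_univ σ)).trans hσ) (by positivity)
  · rintro c ⟨π, rfl⟩
    exact mul_le_mul_of_nonneg_left (hπ₀ π (mem_univ π)) (by positivity)

/-- **Birkhoff-type minimization.**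
For `u, v ∈ ℝ^N`, the infimum over doubly stochastic matrices `P` of
`(1/N) Σ_{i,j} P_{ij} (u_i − v_j)²` is attained, and it equals the minimum over all
permutations `π` of `(1/N) Σ_i (u_i − v_{π(i)})²`. -/
theorem doublyStochastic_min_eq_perm_min (N : ℕ) (hN : 1 ≤ N) (u v : Fin N → ℝ) :
    ∃ m : ℝ,
      IsLeast {c : ℝ | ∃ P : Matrix (Fin N) (Fin N) ℝ,
          (∀ i j, 0 ≤ P i j) ∧ (∀ i, ∑ j, P i j = 1) ∧ (∀ j, ∑ i, P i j = 1) ∧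
          c = (1 / (N : ℝ)) * ∑ i, ∑ j, P i j * (u i - v j) ^ 2} m ∧
      IsLeast {c : ℝ | ∃ π : Equiv.Perm (Fin N),
          c = (1 / (N : ℝ)) * ∑ i, (u i - v (π i)) ^ 2} m :=
  doublyStochastic_min_eq_perm_min_general N u v
end

section
/- Let 0 < p < 1 and γ > 0, and set γ_c = 1 + 3 (p²(1−p))^{1/3} + 3 (p(1−p)²)^{1/3}. Consider the quartic polynomial g(u) = u⁴ − 2√γ u³ + (γ − 1) u² + 2 p √γ u − p γ. If γ < γ_c, then g has exactly two distinct real roots; if γ > γ_c, then g has exactly four distinct real roots. -/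
private noncomputable def φf (p q s : ℝ) : ℝ → ℝ :=
  fun u => p / u ^ 2 + q / (u - s) ^ 2 - 1

set_option maxHeartbeats 1000000 in
private lemma phi_aux (p q γ γc s a b : ℝ) (hp : 0 < p) (hq0 : 0 < q) (hpq : p + q = 1)
    (hγ : 0 < γ) (hs0 : 0 < s) (hs2 : s ^ 2 = γ) (ha0 : 0 < a) (hb0 : 0 < b)
    (ha3 : a ^ 3 = p) (hb3 : b ^ 3 = q) (hA3 : (a + b) ^ 3 = γc) :
    (γ < γc → {u : ℝ | u ≠ 0 ∧ u ≠ s ∧ φf p q s u = 0}.ncard = 2) ∧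
    (γc < γ → {u : ℝ | u ≠ 0 ∧ u ≠ s ∧ φf p q s u = 0}.ncard = 4) := by
  have hp1 : p < 1 := by linarith
  have hq1 : q < 1 := by linarith
  have sqpos : ∀ x : ℝ, x ≠ 0 → 0 < x ^ 2 :=
    fun x hx => (sq_nonneg x).lt_of_ne (Ne.symm (pow_ne_zero 2 hx))
  have hab : 0 < a + b := by linarith
  set uS := s * a / (a + b) with huSdef
  have huS0 : 0 < uS := div_pos (mul_pos hs0 ha0) hab
  have huSs : uS < s := by
    rw [huSdef, div_lt_iff₀ hab]
    have := mul_pos hs0 hb0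
    linarith [this]
  have hφuS : φf p q s uS = (γc - γ) / γ := by
    have key : p / uS ^ 2 + q / (uS - s) ^ 2 - 1 = ((a + b) ^ 3 - s ^ 2) / s ^ 2 := by
      have e1 : uS - s = -(s * b / (a + b)) := by rw [huSdef]; field_simp; ring
      rw [e1, huSdef, ← ha3, ← hb3]
      field_simp
    rw [show φf p q s uS = p / uS ^ 2 + q / (uS - s) ^ 2 - 1 from rfl, key, hA3, hs2]
  -- derivative
  have hDer : ∀ u, u ≠ 0 → u ≠ s →
      HasDerivAt (φf p q s) (-(2*p)/u^3 - (2*q)/(u-s)^3) u := by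
    intro u h0 hsu
    have h1 : u ^ 2 ≠ 0 := pow_ne_zero _ h0
    have hus : u - s ≠ 0 := sub_ne_zero.mpr hsu
    have h2 : (u - s) ^ 2 ≠ 0 := pow_ne_zero _ hus
    have d1 : HasDerivAt (fun u : ℝ => u ^ 2) (2 * u) u := by
      simpa using hasDerivAt_pow 2 u
    have d2 : HasDerivAt (fun u : ℝ => (u - s) ^ 2) (2 * (u - s)) u := by
      have := ((hasDerivAt_id u).sub_const s).pow 2
      exact this.congr_deriv (by simp)
    have D1 := (hasDerivAt_const u p).div d1 h1
    have D2 := (hasDerivAt_const u q).div d2 h2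
    have D := (D1.add D2).sub_const 1
    show HasDerivAt (fun u : ℝ => p / u ^ 2 + q / (u - s) ^ 2 - 1) _ u
    refine D.congr_deriv ?_
    field_simp
    ring
  -- derivative signs
  have hderivNeg : ∀ u ∈ Set.Ioo (0:ℝ) uS, deriv (φf p q s) u < 0 := by
    intro u hu
    have h0 : u ≠ 0 := ne_of_gt hu.1
    have hus : u < s := lt_trans hu.2 huSs
    have hsu : u ≠ s := ne_of_lt hus
    rw [(hDer u h0 hsu).deriv]
    have hsu0 : 0 < s - u := by linarith
    have hk : b * u < a * (s - u) := by
      have h := hu.2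
      rw [huSdef, lt_div_iff₀ hab] at h
      linarith
    have hk3 : q * u ^ 3 < p * (s - u) ^ 3 := by
      have h1 : (b * u) ^ 3 < (a * (s - u)) ^ 3 :=
        pow_lt_pow_left₀ hk (mul_nonneg hb0.le hu.1.le) (by norm_num)
      calc q * u ^ 3 = (b * u) ^ 3 := by rw [← hb3]; ring
        _ < (a * (s - u)) ^ 3 := h1
        _ = p * (s - u) ^ 3 := by rw [← ha3]; ring
    have hM : 0 < u ^ 3 * (s - u) ^ 3 := mul_pos (pow_pos hu.1 3) (pow_pos hsu0 3)
    have hI : (-(2*p)/u^3 - (2*q)/(u-s)^3) * (u ^ 3 * (s - u) ^ 3)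
        = 2 * (q * u ^ 3 - p * (s - u) ^ 3) := by
      have hu3 : u ^ 3 ≠ 0 := pow_ne_zero _ h0
      have hsu3 : (u - s) ^ 3 ≠ 0 := pow_ne_zero _ (sub_ne_zero.mpr hsu)
      field_simp
      ring
    by_contra hc
    push_neg at hc
    have h5 := mul_nonneg hc hM.le
    rw [hI] at h5
    linarith
  have hderivPos : ∀ u ∈ Set.Ioo uS s, 0 < deriv (φf p q s) u := by
    intro u hu
    have hu0 : 0 < u := lt_trans huS0 hu.1
    have h0 : u ≠ 0 := ne_of_gt hu0
    have hus : u < s := hu.2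
    have hsu : u ≠ s := ne_of_lt hus
    rw [(hDer u h0 hsu).deriv]
    have hsu0 : 0 < s - u := by linarith
    have hk : a * (s - u) < b * u := by
      have h := hu.1
      rw [huSdef, div_lt_iff₀ hab] at h
      linarith
    have hk3 : p * (s - u) ^ 3 < q * u ^ 3 := by
      have h1 : (a * (s - u)) ^ 3 < (b * u) ^ 3 :=
        pow_lt_pow_left₀ hk (mul_nonneg ha0.le hsu0.le) (by norm_num)
      calc p * (s - u) ^ 3 = (a * (s - u)) ^ 3 := by rw [← ha3]; ring
        _ < (b * u) ^ 3 := h1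
        _ = q * u ^ 3 := by rw [← hb3]; ring
    have hM : 0 < u ^ 3 * (s - u) ^ 3 := mul_pos (pow_pos hu0 3) (pow_pos hsu0 3)
    have hI : (-(2*p)/u^3 - (2*q)/(u-s)^3) * (u ^ 3 * (s - u) ^ 3)
        = 2 * (q * u ^ 3 - p * (s - u) ^ 3) := by
      have hu3 : u ^ 3 ≠ 0 := pow_ne_zero _ h0
      have hsu3 : (u - s) ^ 3 ≠ 0 := pow_ne_zero _ (sub_ne_zero.mpr hsu)
      field_simp
      ring
    by_contra hc
    push_neg at hc
    have h5 := mul_nonneg (neg_nonneg.mpr hc) hM.le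
    have h6 : (-(2*p)/u^3 - (2*q)/(u-s)^3) * (u ^ 3 * (s - u) ^ 3) ≤ 0 := by linarith [h5]
    rw [hI] at h6
    linarith
  -- continuity
  have hcont : ∀ D : Set ℝ, (∀ u ∈ D, u ≠ 0 ∧ u ≠ s) → ContinuousOn (φf p q s) D := by
    intro D hD
    show ContinuousOn (fun u : ℝ => p / u ^ 2 + q / (u - s) ^ 2 - 1) D
    apply ContinuousOn.sub _ continuousOn_const
    apply ContinuousOn.add
    · exact ContinuousOn.div continuousOn_const (by fun_prop)
        (fun u hu => pow_ne_zero _ (hD u hu).1)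
    · exact ContinuousOn.div continuousOn_const (by fun_prop)
        (fun u hu => pow_ne_zero _ (sub_ne_zero.mpr (hD u hu).2))
  -- monotone pieces
  have m1 : StrictMonoOn (φf p q s) (Set.Iio (0:ℝ)) := by
    intro x hx y hy hxy
    simp only [Set.mem_Iio] at hx hy
    have hx2 : 0 < x ^ 2 := sqpos x (ne_of_lt hx)
    have hy2 : 0 < y ^ 2 := sqpos y (ne_of_lt hy)
    have hxs : x - s < 0 := by linarith
    have hys : y - s < 0 := by linarith
    have hxs2 : 0 < (x - s) ^ 2 := sqpos _ (ne_of_lt hxs)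
    have hys2 : 0 < (y - s) ^ 2 := sqpos _ (ne_of_lt hys)
    have hy2x : y ^ 2 < x ^ 2 := by
      have h1 := mul_lt_mul_of_neg_right hxy hy
      have h2 := mul_lt_mul_of_neg_left hxy hx
      linarith [h1, h2]

    have hys2x : (y - s) ^ 2 < (x - s) ^ 2 := by
      have hxy' : x - s < y - s := by linarith
      have h1 := mul_lt_mul_of_neg_right hxy' hys
      have h2 := mul_lt_mul_of_neg_left hxy' hxs
      linarith [h1, h2]
    have A : p / x ^ 2 < p / y ^ 2 := by
      rw [div_lt_div_iff₀ hx2 hy2]; exact mul_lt_mul_of_pos_left hy2x hp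
    have B : q / (x - s) ^ 2 < q / (y - s) ^ 2 := by
      rw [div_lt_div_iff₀ hxs2 hys2]; exact mul_lt_mul_of_pos_left hys2x hq0
    show p / x ^ 2 + q / (x - s) ^ 2 - 1 < p / y ^ 2 + q / (y - s) ^ 2 - 1
    linarith
  have m4 : StrictAntiOn (φf p q s) (Set.Ioi s) := by
    intro x hx y hy hxy
    simp only [Set.mem_Ioi] at hx hy
    have hx0 : 0 < x := lt_trans hs0 hx
    have hy0 : 0 < y := lt_trans hs0 hy
    have hx2 : 0 < x ^ 2 := sqpos x (ne_of_gt hx0)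
    have hy2 : 0 < y ^ 2 := sqpos y (ne_of_gt hy0)
    have hxs : 0 < x - s := by linarith
    have hys : 0 < y - s := by linarith
    have hxs2 : 0 < (x - s) ^ 2 := sqpos _ (ne_of_gt hxs)
    have hys2 : 0 < (y - s) ^ 2 := sqpos _ (ne_of_gt hys)
    have hx2y : x ^ 2 < y ^ 2 := by
      have := mul_pos (sub_pos.mpr hxy) (show 0 < x + y by linarith)
      linarith [this]
    have hxs2y : (x - s) ^ 2 < (y - s) ^ 2 := by
      have := mul_pos (sub_pos.mpr hxy) (show 0 < (x - s) + (y - s) by linarith)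
      linarith [this]
    have A : p / y ^ 2 < p / x ^ 2 := by
      rw [div_lt_div_iff₀ hy2 hx2]; exact mul_lt_mul_of_pos_left hx2y hp
    have B : q / (y - s) ^ 2 < q / (x - s) ^ 2 := by
      rw [div_lt_div_iff₀ hys2 hxs2]; exact mul_lt_mul_of_pos_left hxs2y hq0
    show p / y ^ 2 + q / (y - s) ^ 2 - 1 < p / x ^ 2 + q / (x - s) ^ 2 - 1
    linarith
  have m2 : StrictAntiOn (φf p q s) (Set.Ioc 0 uS) := by
    apply strictAntiOn_of_deriv_neg (convex_Ioc _ _)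
    · exact hcont _ (fun u hu => ⟨ne_of_gt hu.1, ne_of_lt (lt_of_le_of_lt hu.2 huSs)⟩)
    · rw [interior_Ioc]; exact hderivNeg
  have m3 : StrictMonoOn (φf p q s) (Set.Ico uS s) := by
    apply strictMonoOn_of_deriv_pos (convex_Ico _ _)
    · exact hcont _ (fun u hu => ⟨ne_of_gt (lt_of_lt_of_le huS0 hu.1), ne_of_lt hu.2⟩)
    · rw [interior_Ico]; exact hderivPos
  -- IVT helpers
  have ivt : ∀ x y : ℝ, x < y → (∀ u ∈ Set.Icc x y, u ≠ 0 ∧ u ≠ s) →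
      0 < φf p q s x → φf p q s y < 0 → ∃ r ∈ Set.Ioo x y, φf p q s r = 0 := by
    intro x y hxy hD h1 h2
    have h := intermediate_value_Ioo' hxy.le (hcont _ hD)
    obtain ⟨r, hr, hr0⟩ := h (Set.mem_Ioo.mpr ⟨h2, h1⟩)
    exact ⟨r, hr, hr0⟩
  have ivt' : ∀ x y : ℝ, x < y → (∀ u ∈ Set.Icc x y, u ≠ 0 ∧ u ≠ s) →
      φf p q s x < 0 → 0 < φf p q s y → ∃ r ∈ Set.Ioo x y, φf p q s r = 0 := by
    intro x y hxy hD h1 h2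
    have h := intermediate_value_Ioo hxy.le (hcont _ hD)
    obtain ⟨r, hr, hr0⟩ := h (Set.mem_Ioo.mpr ⟨h1, h2⟩)
    exact ⟨r, hr, hr0⟩
  -- outer root r1 ∈ (-1, -√p/2)
  have hsp0 : 0 < Real.sqrt p := Real.sqrt_pos.mpr hp
  have hsp1 : Real.sqrt p < 1 := by
    have h := Real.sqrt_lt_sqrt hp.le hp1
    rwa [Real.sqrt_one] at h
  have hc21 : (-1:ℝ) < -(Real.sqrt p) / 2 := by linarith
  have hc20 : -(Real.sqrt p) / 2 < 0 := by linarith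
  have hφm1 : φf p q s (-1) < 0 := by
    show p / ((-1:ℝ)) ^ 2 + q / ((-1:ℝ) - s) ^ 2 - 1 < 0
    have h1 : (1:ℝ) < ((-1:ℝ) - s) ^ 2 := by linarith [sq_nonneg s]
    have h2 : q / ((-1:ℝ) - s) ^ 2 < q := by
      rw [div_lt_iff₀ (by linarith)]
      have := mul_lt_mul_of_pos_left h1 hq0
      linarith
    have h3 : p / ((-1:ℝ)) ^ 2 = p := by norm_num
    rw [h3]; linarith
  have hφc2 : 0 < φf p q s (-(Real.sqrt p) / 2) := by
    show 0 < p / (-(Real.sqrt p) / 2) ^ 2 + q / (-(Real.sqrt p) / 2 - s) ^ 2 - 1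
    have h1 : (-(Real.sqrt p) / 2) ^ 2 = p / 4 := by
      linear_combination (1/4 : ℝ) * Real.sq_sqrt hp.le
    have h2 : p / (-(Real.sqrt p) / 2) ^ 2 = 4 := by
      rw [h1]; field_simp
    have h3 : 0 < q / (-(Real.sqrt p) / 2 - s) ^ 2 :=
      div_pos hq0 (sqpos _ (ne_of_lt (by linarith)))
    rw [h2]; linarith
  obtain ⟨r1, hr1mem, hr1⟩ := ivt' (-1) (-(Real.sqrt p) / 2) hc21
    (fun u hu => ⟨ne_of_lt (lt_of_le_of_lt hu.2 hc20),
      ne_of_lt (lt_of_le_of_lt hu.2 (by linarith))⟩) hφm1 hφc2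
  have hr1neg : r1 < 0 := lt_trans hr1mem.2 hc20
  -- outer root r2 ∈ (s + √q/2, s + 1)
  have hsq0 : 0 < Real.sqrt q := Real.sqrt_pos.mpr hq0
  have hsq1 : Real.sqrt q < 1 := by
    have h := Real.sqrt_lt_sqrt hq0.le hq1
    rwa [Real.sqrt_one] at h
  have hc34 : s + Real.sqrt q / 2 < s + 1 := by linarith
  have hφc3 : 0 < φf p q s (s + Real.sqrt q / 2) := by
    show 0 < p / (s + Real.sqrt q / 2) ^ 2 + q / (s + Real.sqrt q / 2 - s) ^ 2 - 1
    have h1 : (s + Real.sqrt q / 2 - s) ^ 2 = q / 4 := by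
      linear_combination (1/4 : ℝ) * Real.sq_sqrt hq0.le
    have h2 : q / (s + Real.sqrt q / 2 - s) ^ 2 = 4 := by
      rw [h1]; field_simp
    have h3 : 0 < p / (s + Real.sqrt q / 2) ^ 2 :=
      div_pos hp (sqpos _ (ne_of_gt (by linarith)))
    rw [h2]; linarith
  have hφc4 : φf p q s (s + 1) < 0 := by
    show p / (s + 1) ^ 2 + q / (s + 1 - s) ^ 2 - 1 < 0
    have h1 : (1:ℝ) < (s + 1) ^ 2 := by linarith [sq_nonneg s]
    have h2 : p / (s + 1) ^ 2 < p := by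
      rw [div_lt_iff₀ (by linarith)]
      have := mul_lt_mul_of_pos_left h1 hp
      linarith
    have h3 : q / (s + 1 - s) ^ 2 = q := by norm_num
    rw [h3]; linarith
  obtain ⟨r2, hr2mem, hr2⟩ := ivt (s + Real.sqrt q / 2) (s + 1) hc34
    (fun u hu => ⟨ne_of_gt (lt_of_lt_of_le (by linarith) hu.1),
      ne_of_gt (lt_of_lt_of_le (by linarith) hu.1)⟩) hφc3 hφc4
  have hr2s : s < r2 := lt_trans (by linarith) hr2mem.1
  constructor
  · -- γ < γc : two roots
    intro hlt
    have hφuSpos : 0 < φf p q s uS := by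
      rw [hφuS]; exact div_pos (by linarith) hγ
    have hmid : ∀ u, 0 < u → u < s → φf p q s u ≠ 0 := by
      intro u h0 hus
      rcases le_or_gt u uS with h | h
      · rcases h.lt_or_eq with h' | h'
        · have := m2 (Set.mem_Ioc.mpr ⟨h0, h⟩) (Set.mem_Ioc.mpr ⟨huS0, le_refl _⟩) h'
          exact ne_of_gt (by linarith)
        · rw [h']; exact ne_of_gt hφuSpos
      · have := m3 (Set.mem_Ico.mpr ⟨le_refl _, huSs⟩) (Set.mem_Ico.mpr ⟨h.le, hus⟩) h
        exact ne_of_gt (by linarith)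
    have hset : {u : ℝ | u ≠ 0 ∧ u ≠ s ∧ φf p q s u = 0} = {r1, r2} := by
      ext u
      simp only [Set.mem_setOf_eq, Set.mem_insert_iff, Set.mem_singleton_iff]
      constructor
      · rintro ⟨h0, hsu, hφu⟩
        rcases lt_trichotomy u 0 with h | h | h
        · left
          exact m1.injOn (Set.mem_Iio.mpr h) (Set.mem_Iio.mpr hr1neg) (hφu.trans hr1.symm)
        · exact absurd h h0
        · rcases lt_trichotomy u s with h' | h' | h'
          · exact absurd hφu (hmid u h h')
          · exact absurd h' hsu
          · right
            exact m4.injOn (Set.mem_Ioi.mpr h') (Set.mem_Ioi.mpr hr2s) (hφu.trans hr2.symm)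
      · rintro (rfl | rfl)
        · exact ⟨ne_of_lt hr1neg, ne_of_lt (by linarith), hr1⟩
        · exact ⟨ne_of_gt (by linarith), ne_of_gt hr2s, hr2⟩
    rw [hset]
    exact Set.ncard_pair (ne_of_lt (by linarith))
  · -- γc < γ : four roots
    intro hgt
    have hφuSneg : φf p q s uS < 0 := by
      rw [hφuS]; exact div_neg_of_neg_of_pos (by linarith) hγ
    -- inner root a' ∈ (d1, uS)
    have hd10 : 0 < min (Real.sqrt p) uS / 2 :=
      div_pos (lt_min hsp0 huS0) (by norm_num)
    have hd1uS : min (Real.sqrt p) uS / 2 < uS := by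
      have := min_le_right (Real.sqrt p) uS; linarith
    have hd1p : (min (Real.sqrt p) uS / 2) ^ 2 < p := by
      have h1 := min_le_left (Real.sqrt p) uS
      have h2 := mul_le_mul h1 h1 (by linarith [hd10]) (Real.sqrt_nonneg p)
      linarith [Real.sq_sqrt hp.le, h2]
    have hφd1 : 0 < φf p q s (min (Real.sqrt p) uS / 2) := by
      show 0 < p / (min (Real.sqrt p) uS / 2) ^ 2
        + q / (min (Real.sqrt p) uS / 2 - s) ^ 2 - 1
      have h2 : 1 < p / (min (Real.sqrt p) uS / 2) ^ 2 := by
        rw [lt_div_iff₀ (sqpos _ (ne_of_gt hd10))]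
        linarith [hd1p]
      have h3 : 0 < q / (min (Real.sqrt p) uS / 2 - s) ^ 2 :=
        div_pos hq0 (sqpos _ (ne_of_lt (by linarith)))
      linarith
    obtain ⟨a', ha'mem, ha'⟩ := ivt (min (Real.sqrt p) uS / 2) uS hd1uS
      (fun u hu => ⟨ne_of_gt (lt_of_lt_of_le hd10 hu.1),
        ne_of_lt (lt_of_le_of_lt hu.2 huSs)⟩) hφd1 hφuSneg
    have ha'0 : 0 < a' := lt_trans hd10 ha'mem.1
    have ha's : a' < s := lt_trans ha'mem.2 huSs
    have ha'uS : a' < uS := ha'mem.2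
    -- inner root b' ∈ (uS, d2)
    have hd2min : 0 < min (Real.sqrt q) (s - uS) :=
      lt_min hsq0 (by linarith)
    have hd2s : s - min (Real.sqrt q) (s - uS) / 2 < s := by linarith
    have huSd2 : uS < s - min (Real.sqrt q) (s - uS) / 2 := by
      have := min_le_right (Real.sqrt q) (s - uS); linarith
    have hd2q : (s - min (Real.sqrt q) (s - uS) / 2 - s) ^ 2 < q := by
      have h1 := min_le_left (Real.sqrt q) (s - uS)
      have h2 := mul_le_mul h1 h1 hd2min.le (Real.sqrt_nonneg q)
      linarith [Real.sq_sqrt hq0.le, h2]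
    have hφd2 : 0 < φf p q s (s - min (Real.sqrt q) (s - uS) / 2) := by
      show 0 < p / (s - min (Real.sqrt q) (s - uS) / 2) ^ 2
        + q / (s - min (Real.sqrt q) (s - uS) / 2 - s) ^ 2 - 1
      have h2 : 1 < q / (s - min (Real.sqrt q) (s - uS) / 2 - s) ^ 2 := by
        rw [lt_div_iff₀ (sqpos _ (ne_of_lt (by linarith)))]
        linarith [hd2q]
      have h3 : 0 < p / (s - min (Real.sqrt q) (s - uS) / 2) ^ 2 :=
        div_pos hp (sqpos _ (ne_of_gt (by linarith)))
      linarith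
    obtain ⟨b', hb'mem, hb'⟩ := ivt' uS (s - min (Real.sqrt q) (s - uS) / 2) huSd2
      (fun u hu => ⟨ne_of_gt (lt_of_lt_of_le huS0 hu.1),
        ne_of_lt (lt_of_le_of_lt hu.2 hd2s)⟩) hφuSneg hφd2
    have hb's : b' < s := lt_trans hb'mem.2 hd2s
    have hb'uS : uS < b' := hb'mem.1
    have hset : {u : ℝ | u ≠ 0 ∧ u ≠ s ∧ φf p q s u = 0} = {r1, a', b', r2} := by
      ext u
      simp only [Set.mem_setOf_eq, Set.mem_insert_iff, Set.mem_singleton_iff]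
      constructor
      · rintro ⟨h0, hsu, hφu⟩
        rcases lt_trichotomy u 0 with h | h | h
        · left
          exact m1.injOn (Set.mem_Iio.mpr h) (Set.mem_Iio.mpr hr1neg) (hφu.trans hr1.symm)
        · exact absurd h h0
        · rcases lt_trichotomy u s with h' | h' | h'
          · rcases le_or_gt u uS with h'' | h''
            · right; left
              exact m2.injOn (Set.mem_Ioc.mpr ⟨h, h''⟩)
                (Set.mem_Ioc.mpr ⟨ha'0, ha'uS.le⟩) (hφu.trans ha'.symm)
            · right; right; left
              exact m3.injOn (Set.mem_Ico.mpr ⟨h''.le, h'⟩)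
                (Set.mem_Ico.mpr ⟨hb'uS.le, hb's⟩) (hφu.trans hb'.symm)
          · exact absurd h' hsu
          · right; right; right
            exact m4.injOn (Set.mem_Ioi.mpr h') (Set.mem_Ioi.mpr hr2s) (hφu.trans hr2.symm)
      · rintro (rfl | rfl | rfl | rfl)
        · exact ⟨ne_of_lt hr1neg, ne_of_lt (by linarith), hr1⟩
        · exact ⟨ne_of_gt ha'0, ne_of_lt ha's, ha'⟩
        · exact ⟨ne_of_gt (by linarith), ne_of_lt hb's, hb'⟩
        · exact ⟨ne_of_gt (by linarith), ne_of_gt hr2s, hr2⟩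
    have hne1 : r1 ≠ a' := ne_of_lt (by linarith)
    have hne2 : r1 ≠ b' := ne_of_lt (by linarith)
    have hne3 : r1 ≠ r2 := ne_of_lt (by linarith)
    have hne4 : a' ≠ b' := ne_of_lt (by linarith)
    have hne5 : a' ≠ r2 := ne_of_lt (by linarith)
    have hne6 : b' ≠ r2 := ne_of_lt (by linarith)
    rw [hset, Set.ncard_insert_of_notMem (by simp [hne1, hne2, hne3]) (Set.toFinite _),
      Set.ncard_insert_of_notMem (by simp [hne4, hne5]) (Set.toFinite _),
      Set.ncard_pair hne6]

set_option maxHeartbeats 1000000 in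
/-- **Root count of the quartic `g` across the critical SNR.**
Let `0 < p < 1`, `γ > 0` and `γ_c = 1 + 3 (p²(1−p))^{1/3} + 3 (p(1−p)²)^{1/3}`.
Consider `g(u) = u⁴ − 2√γ u³ + (γ − 1) u² + 2p√γ u − pγ`.
If `γ < γ_c`, then `g` has exactly two distinct real roots; if `γ > γ_c`, then `g` has
exactly four distinct real roots. -/
theorem quartic_root_count (p γ : ℝ) (hp : 0 < p) (hp1 : p < 1) (hγ : 0 < γ)
    (γc : ℝ) (hγc : γc = 1 + 3 * (p ^ 2 * (1 - p)) ^ ((1 : ℝ) / 3)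
      + 3 * (p * (1 - p) ^ 2) ^ ((1 : ℝ) / 3))
    (g : ℝ → ℝ)
    (hg : ∀ u, g u = u ^ 4 - 2 * Real.sqrt γ * u ^ 3 + (γ - 1) * u ^ 2
      + 2 * p * Real.sqrt γ * u - p * γ) :
    (γ < γc → {u : ℝ | g u = 0}.ncard = 2) ∧ (γc < γ → {u : ℝ | g u = 0}.ncard = 4) := by
  set s := Real.sqrt γ with hsdef
  have hs0 : 0 < s := Real.sqrt_pos.mpr hγ
  have hs2 : s ^ 2 = γ := Real.sq_sqrt hγ.le
  set q := 1 - p with hqdef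
  have hq0 : 0 < q := by rw [hqdef]; linarith
  have hpq : p + q = 1 := by rw [hqdef]; ring
  set a := p ^ ((1:ℝ)/3) with hadef
  set b := q ^ ((1:ℝ)/3) with hbdef
  have ha0 : 0 < a := Real.rpow_pos_of_pos hp _
  have hb0 : 0 < b := Real.rpow_pos_of_pos hq0 _
  have ha3 : a ^ 3 = p := by
    rw [hadef, ← Real.rpow_natCast (p ^ ((1:ℝ)/3)) 3, ← Real.rpow_mul hp.le]
    norm_num
  have hb3 : b ^ 3 = q := by
    rw [hbdef, ← Real.rpow_natCast (q ^ ((1:ℝ)/3)) 3, ← Real.rpow_mul hq0.le]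
    norm_num
  have hA3 : (a + b) ^ 3 = γc := by
    have h1 : (p ^ 2 * q) ^ ((1:ℝ)/3) = a ^ 2 * b := by
      rw [Real.mul_rpow (by positivity) hq0.le, hadef, hbdef,
        ← Real.rpow_natCast p 2, ← Real.rpow_mul hp.le,
        ← Real.rpow_natCast (p ^ ((1:ℝ)/3)) 2, ← Real.rpow_mul hp.le]
      norm_num
    have h2 : (p * q ^ 2) ^ ((1:ℝ)/3) = a * b ^ 2 := by
      rw [Real.mul_rpow hp.le (by positivity), hbdef,
        ← Real.rpow_natCast q 2, ← Real.rpow_mul hq0.le,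
        ← Real.rpow_natCast (q ^ ((1:ℝ)/3)) 2, ← Real.rpow_mul hq0.le]
      norm_num
      exact Or.inl hadef.symm
    rw [hγc, h1, h2]
    linear_combination ha3 + hb3 + hpq
  -- g vs φf
  have hg0 : g 0 ≠ 0 := by
    rw [hg 0]
    intro h
    have := mul_pos hp hγ
    linarith
  have hgs : g s ≠ 0 := by
    have e : g s = (p - 1) * γ := by
      rw [hg s]
      linear_combination (-s ^ 2 - 1 + 2 * p) * hs2
    rw [e]
    intro h
    have h1 : 0 < (1 - p) * γ := mul_pos (by linarith) hγ
    linarith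
  have hgphi : ∀ u, u ≠ 0 → u ≠ s → (g u = 0 ↔ φf p q s u = 0) := by
    intro u h0 hsu
    have h1 : u ^ 2 ≠ 0 := pow_ne_zero _ h0
    have h2 : (u - s) ^ 2 ≠ 0 := pow_ne_zero _ (sub_ne_zero.mpr hsu)
    have hid : g u = -(u ^ 2 * (u - s) ^ 2) * φf p q s u := by
      rw [hg u, show γ = s ^ 2 from hs2.symm,
        show φf p q s u = p / u ^ 2 + q / (u - s) ^ 2 - 1 from rfl]
      field_simp
      rw [hqdef]
      ring
    rw [hid]
    constructor
    · intro h
      rcases mul_eq_zero.mp h with h | h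
      · exact absurd h (by simp [h1, h2])
      · exact h
    · intro h; rw [h, mul_zero]
  have hsets : {u : ℝ | g u = 0} = {u : ℝ | u ≠ 0 ∧ u ≠ s ∧ φf p q s u = 0} := by
    ext u
    simp only [Set.mem_setOf_eq]
    constructor
    · intro hu
      have h0 : u ≠ 0 := by rintro rfl; exact hg0 hu
      have hsu : u ≠ s := by rintro rfl; exact hgs hu
      exact ⟨h0, hsu, (hgphi u h0 hsu).mp hu⟩
    · rintro ⟨h0, hsu, hφu⟩
      exact (hgphi u h0 hsu).mpr hφu
  rw [hsets]
  exact phi_aux p q γ γc s a b hp hq0 hpq hγ hs0 hs2 ha0 hb0 ha3 hb3 hA3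
end

section
/- Let n ≥ 1 and let σ : Fin n → ℝ take pairwise distinct, strictly positive values; let Σ = diag(σ). Then for a real n×n matrix M the following are equivalent: (i) Tr( M (S Σ − Σ T) ) = 0 for all antisymmetric real n×n matrices S and T; (ii) M is a diagonal matrix. -/
open Matrix

private lemma antisym_aux (n : ℕ) (i j : Fin n) :
    (Matrix.single i j (1:ℝ) - Matrix.single j i 1)ᵀ
      = -(Matrix.single i j (1:ℝ) - Matrix.single j i 1) := by
  ext a b
  simp [Matrix.single, and_comm]

private lemma tr_aux1 (n : ℕ) (σ : Fin n → ℝ) (M : Matrix (Fin n) (Fin n) ℝ) (i j : Fin n) :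
    (M * ((Matrix.single i j (1:ℝ) - Matrix.single j i 1) * Matrix.diagonal σ)).trace
      = M j i * σ j - M i j * σ i := by
  simp [Matrix.trace, Matrix.diag, Matrix.mul_apply, Matrix.diagonal_apply,
    Matrix.single, mul_sub, Finset.sum_sub_distrib, mul_ite, mul_zero, ite_and,
    sub_mul, ite_mul, zero_mul, one_mul,
    Finset.sum_ite_eq, Finset.sum_ite_eq']

private lemma tr_aux2 (n : ℕ) (σ : Fin n → ℝ) (M : Matrix (Fin n) (Fin n) ℝ) (i j : Fin n) :
    (M * (Matrix.diagonal σ * (Matrix.single i j (1:ℝ) - Matrix.single j i 1))).trace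
      = M j i * σ i - M i j * σ j := by
  simp [Matrix.trace, Matrix.diag, Matrix.mul_apply, Matrix.diagonal_apply,
    Matrix.single, mul_sub, Finset.sum_sub_distrib, mul_ite, mul_zero, ite_and,
    sub_mul, ite_mul, zero_mul, one_mul,
    Finset.sum_ite_eq, Finset.sum_ite_eq']

/-- **Diagonal characterization via antisymmetric perturbations.**
Let `σ : Fin n → ℝ` take pairwise distinct strictly positive values and `Σ = diag(σ)`.
For a real `n×n` matrix `M`, one has `Tr(M (S Σ − Σ T)) = 0` for all antisymmetric
matrices `S`, `T` if and only if `M` is diagonal. -/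
theorem trace_antisym_perturbation_eq_zero_iff_isDiag
    (n : ℕ) (hn : 1 ≤ n) (σ : Fin n → ℝ)
    (hσpos : ∀ i, 0 < σ i) (hσinj : Function.Injective σ)
    (M : Matrix (Fin n) (Fin n) ℝ) :
    (∀ S T : Matrix (Fin n) (Fin n) ℝ, Sᵀ = -S → Tᵀ = -T →
        (M * (S * Matrix.diagonal σ - Matrix.diagonal σ * T)).trace = 0) ↔
      M.IsDiag := by
  constructor
  · intro h i j hij
    set E := Matrix.single i j (1:ℝ) - Matrix.single j i 1 with hE
    have hanti := antisym_aux n i j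
    have h1 := h E 0 hanti (by simp)
    have h2 := h 0 E (by simp) hanti
    rw [Matrix.mul_zero, sub_zero] at h1
    rw [Matrix.zero_mul, zero_sub, Matrix.mul_neg, trace_neg, neg_eq_zero] at h2
    rw [hE, tr_aux1] at h1
    rw [hE, tr_aux2] at h2
    -- h1 : M j i * σ j - M i j * σ i = 0, h2 : M j i * σ i - M i j * σ j = 0
    have hne : σ i ≠ σ j := fun he => hij (hσinj he)
    have hi := hσpos i
    have hj := hσpos j
    have key : (σ i - σ j) * (σ i + σ j) * M i j = 0 := by nlinarith [h1, h2]
    have h3 : σ i - σ j ≠ 0 := sub_ne_zero.mpr hne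
    have h4 : σ i + σ j ≠ 0 := by positivity
    rcases mul_eq_zero.mp key with h5 | h5
    · rcases mul_eq_zero.mp h5 with h6 | h6
      · exact absurd h6 h3
      · exact absurd h6 h4
    · exact h5
  · intro hM S T hS hT
    rw [← hM.diagonal_diag]
    have hSd : ∀ k, S k k = 0 := by
      intro k
      have := congrFun (congrFun hS k) k
      simp [Matrix.transpose_apply] at this
      linarith
    have hTd : ∀ k, T k k = 0 := by
      intro k
      have := congrFun (congrFun hT k) k
      simp [Matrix.transpose_apply] at this
      linarith
    simp [Matrix.trace, Matrix.diag, Matrix.mul_apply, Matrix.diagonal_apply,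
      Matrix.sub_apply, Finset.mul_sum, mul_ite, mul_zero, ite_mul, zero_mul,
      Finset.sum_ite_eq, Finset.sum_ite_eq', hSd, hTd]
end

section
/- Let m ≥ 1 be an integer, τ ≥ 0, and let p be a probability measure on ℝ with compact support. Then ∫_{ℝ^m} exp( τ Σ_{1 ≤ a < b ≤ m} y_a y_b ) d(p^{⊗m})(y) = ∫_ℝ ( ∫_ℝ exp( √τ z y − (τ/2) y² ) dp(y) )^m dν(z), where p^{⊗m} is the m-fold product of p and ν is the standard Gaussian measure N(0,1) on ℝ. -/
open MeasureTheory ProbabilityTheory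

lemma sq_expand (m : ℕ) (y : Fin m → ℝ) :
    (∑ a, y a) ^ 2 = ∑ a, (y a) ^ 2 + 2 * ∑ a, ∑ b ∈ Finset.Ioi a, y a * y b := by
  classical
  have swap : ∑ a, ∑ b ∈ Finset.Iio a, y a * y b
      = ∑ a, ∑ b ∈ Finset.Ioi a, y a * y b := by
    simp_rw [← Finset.filter_gt_eq_Iio, ← Finset.filter_lt_eq_Ioi, Finset.sum_filter]
    rw [Finset.sum_comm]
    simp_rw [mul_comm]
  have split : ∀ a : Fin m, ∑ b, y a * y b
      = (∑ b ∈ Finset.Ioi a, y a * y b) + ((y a) ^ 2 + ∑ b ∈ Finset.Iio a, y a * y b) := by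
    intro a
    rw [← Finset.sum_filter_add_sum_filter_not Finset.univ (a < ·)]
    congr 1
    · rw [Finset.filter_lt_eq_Ioi]
    · have : (Finset.univ.filter fun b => ¬ a < b) = Finset.Iic a := by
        ext b; simp [not_lt]
      rw [this, Finset.Iic_eq_cons_Iio, Finset.sum_cons, sq]
  rw [sq, Finset.sum_mul_sum]
  simp_rw [split]
  rw [Finset.sum_add_distrib, Finset.sum_add_distrib, swap]
  ring

lemma gauss_density_eq (t : ℝ) : ∀ x : ℝ,
    gaussianPDFReal 0 1 x * Real.exp (t * x) = Real.exp (t ^ 2 / 2) * gaussianPDFReal t 1 x := by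
  intro x
  simp only [gaussianPDFReal, NNReal.coe_one, mul_one, sub_zero]
  rw [mul_assoc, ← Real.exp_add, ← mul_assoc, mul_comm (Real.exp (t^2/2)), mul_assoc, ← Real.exp_add]
  ring_nf

lemma gauss_mgf (t : ℝ) :
    ∫ z : ℝ, Real.exp (t * z) ∂(gaussianReal 0 1) = Real.exp (t ^ 2 / 2) := by
  rw [gaussianReal_of_var_ne_zero 0 one_ne_zero]
  have hm : Measurable fun x => Real.toNNReal (gaussianPDFReal 0 1 x) :=
    (measurable_gaussianPDFReal 0 1).real_toNNReal
  rw [gaussianPDF_def]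
  rw [show (fun x => ENNReal.ofReal (gaussianPDFReal 0 1 x))
      = (fun x => (Real.toNNReal (gaussianPDFReal 0 1 x) : ENNReal)) from rfl]
  rw [integral_withDensity_eq_integral_smul hm]
  have : ∀ x : ℝ, Real.toNNReal (gaussianPDFReal 0 1 x) • Real.exp (t * x)
      = Real.exp (t ^ 2 / 2) * gaussianPDFReal t 1 x := by
    intro x
    rw [NNReal.smul_def, smul_eq_mul, Real.coe_toNNReal _ (gaussianPDFReal_nonneg 0 1 x)]
    exact gauss_density_eq t x
  simp_rw [this]
  rw [integral_const_mul, integral_gaussianPDFReal_eq_one t one_ne_zero, mul_one]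

lemma gauss_exp_integrable (t : ℝ) :
    Integrable (fun z => Real.exp (t * z)) (gaussianReal 0 1) := by
  rw [gaussianReal_of_var_ne_zero 0 one_ne_zero, gaussianPDF_def]
  have hm : Measurable fun x => Real.toNNReal (gaussianPDFReal 0 1 x) :=
    (measurable_gaussianPDFReal 0 1).real_toNNReal
  rw [show (fun x => ENNReal.ofReal (gaussianPDFReal 0 1 x))
      = (fun x => (Real.toNNReal (gaussianPDFReal 0 1 x) : ENNReal)) from rfl]
  rw [integrable_withDensity_iff_integrable_smul hm]
  have : (fun x : ℝ => Real.toNNReal (gaussianPDFReal 0 1 x) • Real.exp (t * x))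
      = fun x => Real.exp (t ^ 2 / 2) * gaussianPDFReal t 1 x := by
    funext x
    rw [NNReal.smul_def, smul_eq_mul, Real.coe_toNNReal _ (gaussianPDFReal_nonneg 0 1 x)]
    exact gauss_density_eq t x
  rw [this]
  exact (integrable_gaussianPDFReal t 1).const_mul _

lemma gauss_exp_abs_integrable (c : ℝ) :
    Integrable (fun z => Real.exp (c * |z|)) (gaussianReal 0 1) := by
  refine Integrable.mono' ((gauss_exp_integrable c).add (gauss_exp_integrable (-c))) ?_ ?_
  · exact (Real.continuous_exp.comp (continuous_const.mul continuous_abs)).aestronglyMeasurable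
  · refine Filter.Eventually.of_forall fun z => ?_
    rw [Real.norm_eq_abs, abs_of_pos (Real.exp_pos _)]
    rcases abs_cases z with ⟨h, _⟩ | ⟨h, _⟩
    · rw [h]; exact le_add_of_nonneg_right (Real.exp_pos _).le
    · rw [h, ← neg_mul_comm]; exact le_add_of_nonneg_left (Real.exp_pos _).le

lemma pi_integral_pow {E : Type*} [MeasurableSpace E] (μ : Measure E) [SigmaFinite μ]
    (f : E → ℝ) (n : ℕ) :
    ∫ x : Fin n → E, ∏ i, f (x i) ∂(Measure.pi fun _ : Fin n => μ) = (∫ x, f x ∂μ) ^ n := by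
  letI : MeasureSpace E := ⟨μ⟩
  have := MeasureTheory.integral_fintype_prod_eq_pow (𝕜 := ℝ) (ι := Fin n) f (μ := μ)
  simpa [volume, Fintype.card_fin] using this


/-- **Gaussian (Hubbard–Stratonovich) linearization of the replica interaction.**
Let `m ≥ 1`, `τ ≥ 0` and let `p` be a compactly supported probability measure on `ℝ`.
Then `∫_{ℝ^m} exp(τ Σ_{a<b} y_a y_b) dp^{⊗m}(y)
  = ∫_ℝ (∫_ℝ exp(√τ z y − (τ/2) y²) dp(y))^m dN(0,1)(z)`. -/
theorem replica_gaussian_linearization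
    (m : ℕ) (hm : 1 ≤ m) (τ : ℝ) (hτ : 0 ≤ τ)
    (p : Measure ℝ) [IsProbabilityMeasure p]
    (hsupp : ∃ K : Set ℝ, IsCompact K ∧ p Kᶜ = 0) :
    (∫ y : Fin m → ℝ,
        Real.exp (τ * ∑ a : Fin m, ∑ b ∈ Finset.Ioi a, y a * y b)
      ∂(Measure.pi fun _ : Fin m => p)) =
    ∫ z : ℝ, (∫ y : ℝ, Real.exp (Real.sqrt τ * z * y - (τ / 2) * y ^ 2) ∂p) ^ m
      ∂(gaussianReal 0 1) := by
  classical
  obtain ⟨K, hK, hK0⟩ := hsupp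
  obtain ⟨C, hC⟩ := hK.isBounded.subset_closedBall 0
  set C' : ℝ := max C 0 with hC'def
  have hC0 : (0:ℝ) ≤ C' := le_max_right _ _
  have hKC : K ⊆ Metric.closedBall 0 C' :=
    hC.trans (Metric.closedBall_subset_closedBall (le_max_left _ _))
  set ν := gaussianReal 0 1 with hν
  set π := (Measure.pi fun _ : Fin m => p) with hπ
  set F : (Fin m → ℝ) × ℝ → ℝ := fun q =>
    Real.exp (Real.sqrt τ * (∑ a, q.1 a) * q.2 - τ / 2 * ∑ a, (q.1 a) ^ 2) with hFdef
  -- a.e. bound on coordinates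
  have hae : ∀ᵐ y ∂π, ∀ a, |y a| ≤ C' := by
    rw [MeasureTheory.ae_all_iff]
    intro a
    rw [ae_iff]
    have h0 : π (Function.eval a ⁻¹' Kᶜ) = 0 := by
      rw [hπ]; exact Measure.pi_eval_preimage_null (μ := fun _ : Fin m => p) hK0
    refine measure_mono_null (fun y hy => ?_) h0
    simp only [Set.mem_setOf_eq, not_le] at hy
    intro hyK
    have := hKC hyK
    rw [Metric.mem_closedBall, Real.dist_eq, sub_zero] at this
    exact absurd this (not_le.mpr hy)
  have haeprod : ∀ᵐ q ∂(π.prod ν), ∀ a, |q.1 a| ≤ C' := by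
    rw [ae_iff] at hae ⊢
    refine measure_mono_null (t := {y : Fin m → ℝ | ¬ ∀ a, |y a| ≤ C'} ×ˢ Set.univ)
      (fun q hq => Set.mem_prod.mpr ⟨hq, Set.mem_univ _⟩) ?_
    rw [Measure.prod_prod, hae, zero_mul]
  -- continuity of F
  have hFc : Continuous F := by
    apply Real.continuous_exp.comp
    apply Continuous.sub
    · exact (continuous_const.mul (continuous_finset_sum _ fun a _ =>
        (continuous_apply a).comp continuous_fst)).mul continuous_snd
    · exact continuous_const.mul (continuous_finset_sum _ fun a _ =>
        (((continuous_apply a).comp continuous_fst).pow 2))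
  -- integrability of F on the product
  have hg : Integrable (fun q : (Fin m → ℝ) × ℝ =>
      Real.exp (Real.sqrt τ * m * C' * |q.2|)) (π.prod ν) := by
    have h1 : Integrable (fun _ : Fin m → ℝ => (1:ℝ)) π := integrable_const 1
    have h2 := gauss_exp_abs_integrable (Real.sqrt τ * m * C')
    simpa using h1.mul_prod h2
  have hFint : Integrable F (π.prod ν) := by
    refine hg.mono' hFc.aestronglyMeasurable ?_
    filter_upwards [haeprod] with q hq
    rw [Real.norm_eq_abs, abs_of_pos (Real.exp_pos _), Real.exp_le_exp]
    have hsum : |∑ a, q.1 a| ≤ (m : ℝ) * C' := by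
      calc |∑ a, q.1 a| ≤ ∑ a, |q.1 a| := Finset.abs_sum_le_sum_abs _ _
        _ ≤ ∑ _a : Fin m, C' := Finset.sum_le_sum fun a _ => hq a
        _ = (m : ℝ) * C' := by simp [mul_comm]
    have h1 : Real.sqrt τ * (∑ a, q.1 a) * q.2 ≤ Real.sqrt τ * m * C' * |q.2| := by
      calc Real.sqrt τ * (∑ a, q.1 a) * q.2 ≤ |Real.sqrt τ * (∑ a, q.1 a) * q.2| := le_abs_self _
        _ = Real.sqrt τ * |∑ a, q.1 a| * |q.2| := by
            rw [abs_mul, abs_mul, abs_of_nonneg (Real.sqrt_nonneg τ)]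
        _ ≤ Real.sqrt τ * ((m : ℝ) * C') * |q.2| := by
            have := mul_le_mul_of_nonneg_left hsum (Real.sqrt_nonneg τ)
            exact mul_le_mul_of_nonneg_right this (abs_nonneg _)
        _ = Real.sqrt τ * m * C' * |q.2| := by ring
    have h2 : (0:ℝ) ≤ τ / 2 * ∑ a, (q.1 a) ^ 2 := by positivity
    linarith
  -- main chain
  calc (∫ y : Fin m → ℝ,
        Real.exp (τ * ∑ a : Fin m, ∑ b ∈ Finset.Ioi a, y a * y b) ∂π)
      = ∫ y : Fin m → ℝ, ∫ z : ℝ, F (y, z) ∂ν ∂π := by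
        refine integral_congr_ae (Filter.Eventually.of_forall fun y => ?_)
        have hinner : ∫ z : ℝ, F (y, z) ∂ν
            = Real.exp ((Real.sqrt τ * (∑ a, y a)) ^ 2 / 2 - τ / 2 * ∑ a, (y a) ^ 2) := by
          have hptw : ∀ z : ℝ, F (y, z)
              = Real.exp ((Real.sqrt τ * (∑ a, y a)) * z)
                * Real.exp (-(τ / 2 * ∑ a, (y a) ^ 2)) := by
            intro z
            rw [← Real.exp_add]
            simp only [F]
            ring_nf
          simp_rw [hptw]
          rw [integral_mul_const, hν, gauss_mgf, ← Real.exp_add]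
          ring_nf
        show Real.exp (τ * ∑ a : Fin m, ∑ b ∈ Finset.Ioi a, y a * y b) = ∫ z : ℝ, F (y, z) ∂ν
        rw [hinner]
        congr 1
        have h := sq_expand m y
        have hsq : Real.sqrt τ ^ 2 = τ := Real.sq_sqrt hτ
        rw [mul_pow, hsq]
        nlinarith [h]
    _ = ∫ z : ℝ, ∫ y : Fin m → ℝ, F (y, z) ∂π ∂ν := integral_integral_swap hFint
    _ = ∫ z : ℝ, (∫ y : ℝ, Real.exp (Real.sqrt τ * z * y - (τ / 2) * y ^ 2) ∂p) ^ m ∂ν := by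
        refine integral_congr_ae (Filter.Eventually.of_forall fun z => ?_)
        have hprod : ∀ y : Fin m → ℝ, F (y, z)
            = ∏ a, Real.exp (Real.sqrt τ * z * (y a) - (τ / 2) * (y a) ^ 2) := by
          intro y
          rw [← Real.exp_sum]
          simp only [F]
          congr 1
          rw [Finset.sum_sub_distrib]
          congr 1
          · rw [show (Real.sqrt τ * ∑ x : Fin m, y x) * z
                = Real.sqrt τ * z * ∑ x : Fin m, y x from by ring, Finset.mul_sum]
          · rw [Finset.mul_sum]
        simp_rw [hprod]
        rw [hπ, pi_integral_pow p (fun w => Real.exp (Real.sqrt τ * z * w - (τ / 2) * w ^ 2)) m]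
end
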